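/- arXiv:2410.02359 — 8 statements merged into one kernel-verified Lean document; each statement's English description precedes it below -/
import Mathlib

section
/- Let a = (a_0,...,a_n) and b = (b_0,...,b_n) be strictly decreasing sequences of non-negative integers with a ≠ b and b_i ≥ a_i for all i. Then every monomial occurring in the Schur polynomial σ_b(x_0,...,x_n) is properly divisible by some monomial occurring in σ_a(x_0,...,x_n). -/
open MvPolynomial
open Classical

/-- The Schur polynomial in variables `x_0, …, x_n` associated to the Young
diagram `μ`, defined as a sum over semistandard fillings with entries in
`{0, …, n}`. -/
noncomputable def schurPoly (n : ℕ) (μ : YoungDiagram) :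
    MvPolynomial (Fin (n + 1)) ℤ :=
  ∑ T ∈ Finset.univ.filter
      (fun T : μ.cells → Fin (n + 1) =>
        (∀ c c' : μ.cells, (c : ℕ × ℕ).1 = (c' : ℕ × ℕ).1 →
          (c : ℕ × ℕ).2 ≤ (c' : ℕ × ℕ).2 → T c ≤ T c') ∧
        (∀ c c' : μ.cells, (c : ℕ × ℕ).2 = (c' : ℕ × ℕ).2 →
          (c : ℕ × ℕ).1 < (c' : ℕ × ℕ).1 → T c < T c')),
    ∏ c : μ.cells, X (T c)

/-! Since `a i ≥ n - i`, the rows `a i - (n - i)` of `μa` are no longer than the rows of `μb`,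
and strictly shorter where `a i < b i`, so `μa` is a proper subdiagram of `μb`. Restricting a
semistandard tableau of shape `μb` to the cells of `μa` keeps it semistandard; its monomial
divides the original one, properly since its degree `|μa|` is smaller than `|μb|`. -/

namespace YoungDiagram

variable {n : ℕ} {μ ν : YoungDiagram}

def IsSemistandard (T : μ.cells → Fin (n + 1)) : Prop :=
  (∀ c c' : μ.cells, (c : ℕ × ℕ).1 = (c' : ℕ × ℕ).1 →
      (c : ℕ × ℕ).2 ≤ (c' : ℕ × ℕ).2 → T c ≤ T c') ∧
    (∀ c c' : μ.cells, (c : ℕ × ℕ).2 = (c' : ℕ × ℕ).2 →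
      (c : ℕ × ℕ).1 < (c' : ℕ × ℕ).1 → T c < T c')

noncomputable def content (T : μ.cells → Fin (n + 1)) : Fin (n + 1) →₀ ℕ :=
  ∑ c, Finsupp.single (T c) 1

theorem degree_content (T : μ.cells → Fin (n + 1)) : (content T).degree = μ.cells.card := by
  simp [content, map_sum]

theorem prod_X_eq_monomial_content (T : μ.cells → Fin (n + 1)) :
    ∏ c, (X (T c) : MvPolynomial (Fin (n + 1)) ℤ) = monomial (content T) 1 := by
  rw [content, monomial_sum_one]
  rfl

def cellsEmbedding (h : μ ≤ ν) : μ.cells ↪ ν.cells :=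
  ⟨fun c => ⟨c, cells_subset_iff.mpr h c.2⟩,
    fun _ _ hc => Subtype.ext (congrArg Subtype.val hc :)⟩

theorem IsSemistandard.comp_cellsEmbedding (h : μ ≤ ν) {T : ν.cells → Fin (n + 1)}
    (hT : IsSemistandard T) : IsSemistandard (T ∘ cellsEmbedding h) :=
  ⟨fun c c' => hT.1 (cellsEmbedding h c) (cellsEmbedding h c'),
    fun c c' => hT.2 (cellsEmbedding h c) (cellsEmbedding h c')⟩

theorem content_comp_cellsEmbedding_le (h : μ ≤ ν) (T : ν.cells → Fin (n + 1)) :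
    content (T ∘ cellsEmbedding h) ≤ content T := by
  rw [content, content]
  simp only [Function.comp_apply]
  rw [← Finset.sum_map _ (cellsEmbedding h) fun c => Finsupp.single (T c) 1]
  exact Finset.sum_le_sum_of_subset (Finset.subset_univ _)

theorem lt_of_rowLen_le_of_lt (hle : ∀ i, μ.rowLen i ≤ ν.rowLen i) {i : ℕ}
    (hlt : μ.rowLen i < ν.rowLen i) : μ < ν := by
  refine lt_of_le_of_ne (fun c hc => ?_) fun hμν => hlt.ne (hμν ▸ rfl)
  rw [← Prod.mk.eta (p := c), mem_iff_lt_rowLen] at hc ⊢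
  exact hc.trans_le (hle c.1)

end YoungDiagram

open YoungDiagram

theorem mem_support_schurPoly {n : ℕ} {μ : YoungDiagram} {d : Fin (n + 1) →₀ ℕ} :
    d ∈ (schurPoly n μ).support ↔
      ∃ T : μ.cells → Fin (n + 1), IsSemistandard T ∧ content T = d := by
  simp only [schurPoly, prod_X_eq_monomial_content, mem_support_iff, coeff_sum, coeff_monomial,
    Finset.sum_boole, Nat.cast_ne_zero, Finset.card_ne_zero, Finset.filter_filter,
    Finset.filter_nonempty_iff, Finset.mem_univ, true_and, IsSemistandard]

theorem exists_lt_of_mem_support_schurPoly {n : ℕ} {μ ν : YoungDiagram} (h : μ < ν)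
    {d : Fin (n + 1) →₀ ℕ} (hd : d ∈ (schurPoly n ν).support) :
    ∃ e ∈ (schurPoly n μ).support, e < d := by
  obtain ⟨T, hT, rfl⟩ := mem_support_schurPoly.mp hd
  refine ⟨content (T ∘ cellsEmbedding h.le),
    mem_support_schurPoly.mpr ⟨_, hT.comp_cellsEmbedding h.le, rfl⟩,
    lt_of_le_of_ne (content_comp_cellsEmbedding_le h.le T) fun he => ?_⟩
  have hcard := congrArg Finsupp.degree he
  rw [degree_content, degree_content] at hcard
  exact (Finset.card_lt_card (cells_ssubset_iff.mpr h)).ne hcard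

theorem sub_le_of_strictAnti {n : ℕ} {a : Fin (n + 1) → ℕ} (ha : StrictAnti a)
    (i : Fin (n + 1)) : n - i ≤ a i := by
  induction i using Fin.reverseInduction with
  | last => simp
  | cast i ih =>
    have := ha (Fin.castSucc_lt_succ (i := i))
    simp only [Fin.val_succ, Fin.val_castSucc] at ih ⊢
    omega

theorem stmt2_general (n : ℕ) (a b : Fin (n + 1) → ℕ)
    (ha : ∀ i j : Fin (n + 1), i < j → a j < a i)
    (hab : ∀ i, a i ≤ b i) (hne : a ≠ b)
    (μa μb : YoungDiagram)
    (hμa : ∀ i : Fin (n + 1), μa.rowLen i = a i - (n - (i : ℕ)))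
    (hμa' : ∀ m : ℕ, n + 1 ≤ m → μa.rowLen m = 0)
    (hμb : ∀ i : Fin (n + 1), μb.rowLen i = b i - (n - (i : ℕ))) :
    ∀ d ∈ (schurPoly n μb).support, ∃ e ∈ (schurPoly n μa).support,
      e ≤ d ∧ e ≠ d := by
  obtain ⟨i₀, hi₀⟩ : ∃ i, a i < b i := by
    by_contra! h
    exact hne (funext fun i => (hab i).antisymm (h i))
  have hrowLen : ∀ m, μa.rowLen m ≤ μb.rowLen m := by
    intro m
    by_cases hm : m < n + 1
    · obtain ⟨i, rfl⟩ : ∃ i : Fin (n + 1), (i : ℕ) = m := ⟨⟨m, hm⟩, rfl⟩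
      rw [hμa, hμb]
      exact Nat.sub_le_sub_right (hab i) _
    · simp [hμa' m (by omega)]
  have hlt : μa.rowLen i₀ < μb.rowLen i₀ := by
    have := sub_le_of_strictAnti (fun _ _ => ha _ _) i₀
    rw [hμa, hμb]
    omega
  intro d hd
  simpa only [lt_iff_le_and_ne] using
    exists_lt_of_mem_support_schurPoly (lt_of_rowLen_le_of_lt hrowLen hlt) hd

/-- If `a ≠ b` are strictly decreasing sequences of non-negative integers with
`b_i ≥ a_i` for all `i`, then every monomial of `σ_b` is properly divisible by
some monomial of `σ_a`. -/
theorem stmt2 (n : ℕ) (a b : Fin (n + 1) → ℕ)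
    (ha : ∀ i j : Fin (n + 1), i < j → a j < a i)
    (hb : ∀ i j : Fin (n + 1), i < j → b j < b i)
    (hab : ∀ i, a i ≤ b i) (hne : a ≠ b)
    (μa μb : YoungDiagram)
    (hμa : ∀ i : Fin (n + 1), μa.rowLen i = a i - (n - (i : ℕ)))
    (hμa' : ∀ m : ℕ, n + 1 ≤ m → μa.rowLen m = 0)
    (hμb : ∀ i : Fin (n + 1), μb.rowLen i = b i - (n - (i : ℕ)))
    (hμb' : ∀ m : ℕ, n + 1 ≤ m → μb.rowLen m = 0) :
    ∀ d ∈ (schurPoly n μb).support, ∃ e ∈ (schurPoly n μa).support,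
      e ≤ d ∧ e ≠ d :=
  stmt2_general n a b ha hab hne μa μb hμa hμa' hμb
end

section
/- Let B be a commutative ring, p_0,...,p_n ∈ B[[t]] formal power series, and 0 ≤ r ≤ n. Let M be an (n+1)×(n+1) matrix over B[[x_0,...,x_r]] whose i-th row for 0 ≤ i ≤ r is (p_0(x_i),...,p_n(x_i)) and whose remaining n − r rows have entries in B. Then there is a unique power series g ∈ B[[x_0,...,x_r]] with det(M) = g · ∏_{0≤i<j≤r}(x_i − x_j). -/
/-!
Substituting `X k` for `X l` is a ring endomorphism of `B[[x]]` whose kernel is the ideal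
`(X k - X l)`: after the involutive change of variables `X l ↦ X k - X l` it becomes the
substitution `X l ↦ 0`, whose kernel is `(X l)`. This substitution makes rows `k` and `l` of
`M` equal, so every `X k - X l` divides `det M`. It sends `X i - X j`, for any other pair
`i < j`, to a difference of two distinct variables, which is a non-zero-divisor (being the
image of `X l` under the change of variables); so `X k - X l ∣ (X i - X j) * g` forces
`X k - X l ∣ g`, and the factors of the Vandermonde product can be split off one at a time.
Uniqueness holds because the Vandermonde product is a non-zero-divisor.
-/

open Classical

/-- The multivariate power series `p(x_i)` obtained by substituting the single
variable `x_i` into a one-variable power series `p`. -/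
noncomputable def evalAtVar {B : Type*} [CommRing B] {σ : Type*} [DecidableEq σ]
    (i : σ) (p : PowerSeries B) : MvPowerSeries σ B :=
  fun d : σ →₀ ℕ =>
    if ∀ j : σ, j ≠ i → d j = 0 then PowerSeries.coeff (d i) p else 0

open MvPowerSeries
open scoped nonZeroDivisors

theorem Finset.prod_dvd_of_forall_dvd_of_pairwise {M ι : Type*} [CommMonoid M] {s : Finset ι}
    {a : ι → M} {b : M} (hs : (s : Set ι).Pairwise fun i j => ∀ g, a i ∣ a j * g → a i ∣ g)
    (h : ∀ i ∈ s, a i ∣ b) : ∏ i ∈ s, a i ∣ b := by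
  induction s using Finset.cons_induction generalizing b with
  | empty => simp
  | cons i s his ih =>
    obtain ⟨c, rfl⟩ := h i (Finset.mem_cons_self i s)
    rw [Finset.prod_cons]
    refine mul_dvd_mul_left _ (ih (hs.mono (by simp)) fun j hj => ?_)
    exact hs (by simp [hj]) (by simp) (by rintro rfl; exact his hj) c
      (h j (Finset.mem_cons_of_mem hj))

namespace MvPowerSeries

variable {R : Type*} [CommRing R] {σ : Type*} [DecidableEq σ]

theorem hasSubst_update_X (l : σ) {b : MvPowerSeries σ R} (hb : constantCoeff b = 0) :
    HasSubst (Function.update X l b) where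
  const_coeff s := by
    rcases eq_or_ne s l with rfl | hs
    · simp [hb]
    · simp [hs]
  coeff_zero d := ((HasSubst.X (S := R)).coeff_zero d |>.insert l).subset fun s hs => by
    rcases eq_or_ne s l with rfl | h
    · exact Set.mem_insert _ _
    · exact Or.inr (by simpa [h] using hs)

noncomputable def substVar (l : σ) (b : MvPowerSeries σ R) (hb : constantCoeff b = 0) :
    MvPowerSeries σ R →ₐ[R] MvPowerSeries σ R :=
  substAlgHom (hasSubst_update_X l hb)

section substVar

variable {l : σ} {b : MvPowerSeries σ R} {hb : constantCoeff b = 0}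

theorem substVar_apply (f : MvPowerSeries σ R) :
    substVar l b hb f = subst (Function.update X l b) f :=
  substAlgHom_apply _ f

@[simp]
theorem substVar_X (s : σ) : substVar l b hb (X s) = if s = l then b else X s := by
  rw [substVar_apply, subst_X (hasSubst_update_X l hb), Function.update_apply]

theorem substVar_substVar {c : MvPowerSeries σ R} {hc : constantCoeff c = 0}
    {hbc : constantCoeff (substVar l b hb c) = 0} (f : MvPowerSeries σ R) :
    substVar l b hb (substVar l c hc f) = substVar l (substVar l b hb c) hbc f := by
  simp only [substVar_apply]
  rw [subst_comp_subst_apply (hasSubst_update_X l hc) (hasSubst_update_X l hb)]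
  congr 1
  funext s
  rcases eq_or_ne s l with rfl | hs
  · simp
  · simp [hs, subst_X (hasSubst_update_X l hb)]

theorem substVar_X_self (f : MvPowerSeries σ R) :
    substVar l (X l) (constantCoeff_X l) f = f := by
  rw [substVar_apply, Function.update_eq_self, subst_self, id]

end substVar

theorem prod_pow_update_X_zero (l : σ) (d : σ →₀ ℕ) :
    (d.prod fun s e => Function.update (X : σ → MvPowerSeries σ R) l 0 s ^ e)
      = if d l = 0 then monomial d 1 else 0 := by
  split_ifs with hd
  · rw [monomial_one_eq]
    refine Finsupp.prod_congr fun s hs => ?_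
    rw [Function.update_of_ne (by rintro rfl; exact Finsupp.mem_support_iff.mp hs hd)]
  · exact Finset.prod_eq_zero (Finsupp.mem_support_iff.mpr hd) (by simp [zero_pow hd])

theorem coeff_substVar_zero (l : σ) (f : MvPowerSeries σ R) (m : σ →₀ ℕ) :
    coeff m (substVar l 0 (map_zero _) f) = if m l = 0 then coeff m f else 0 := by
  rw [substVar_apply, coeff_subst (hasSubst_update_X l (map_zero _)), finsum_eq_single _ m]
  · rw [prod_pow_update_X_zero]
    split_ifs <;> simp
  · intro d hd
    rw [prod_pow_update_X_zero]
    split_ifs <;> simp [coeff_monomial_ne (Ne.symm hd)]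

theorem X_dvd_iff_substVar_zero_eq_zero {l : σ} {f : MvPowerSeries σ R} :
    X l ∣ f ↔ substVar l 0 (map_zero _) f = 0 := by
  simp only [X_dvd_iff, MvPowerSeries.ext_iff, coeff_substVar_zero, map_zero, ite_eq_right_iff]

section TwoVariables

variable {k l : σ}

theorem substVar_X_sub_X_comp_self (hkl : k ≠ l) :
    (substVar l (X k - X l) (by simp) : MvPowerSeries σ R →ₐ[R] _).comp
      (substVar l (X k - X l) (by simp)) = AlgHom.id R _ :=
  AlgHom.ext fun f => by
    rw [AlgHom.comp_apply, substVar_substVar (hbc := by simp [hkl])]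
    simpa [hkl] using substVar_X_self f

noncomputable def reflectVar (k l : σ) (hkl : k ≠ l) :
    MvPowerSeries σ R ≃ₐ[R] MvPowerSeries σ R :=
  AlgEquiv.ofAlgHom (substVar l (X k - X l) (by simp)) (substVar l (X k - X l) (by simp))
    (substVar_X_sub_X_comp_self hkl) (substVar_X_sub_X_comp_self hkl)

theorem reflectVar_X (hkl : k ≠ l) :
    reflectVar k l hkl (X l : MvPowerSeries σ R) = X k - X l := by
  simp [reflectVar]

theorem reflectVar_X_sub_X (hkl : k ≠ l) :
    reflectVar k l hkl (X k - X l : MvPowerSeries σ R) = X l := by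
  simp [reflectVar, hkl]

theorem X_sub_X_mem_nonZeroDivisors (hkl : k ≠ l) :
    (X k - X l : MvPowerSeries σ R) ∈ (MvPowerSeries σ R)⁰ := by
  rw [← reflectVar_X hkl, ← MulEquivClass.map_nonZeroDivisors (reflectVar (R := R) k l hkl)]
  exact Submonoid.mem_map_of_mem _ X_mem_nonzeroDivisors

noncomputable def identifyVar (k l : σ) : MvPowerSeries σ R →ₐ[R] MvPowerSeries σ R :=
  substVar l (X k) (constantCoeff_X k)

@[simp]
theorem identifyVar_X (s : σ) :
    identifyVar k l (X s : MvPowerSeries σ R) = X (if s = l then k else s) := by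
  rw [identifyVar, substVar_X]
  split_ifs <;> simp_all

theorem identifyVar_eq_substVar_zero_reflectVar (hkl : k ≠ l) (f : MvPowerSeries σ R) :
    identifyVar k l f = substVar l 0 (map_zero _) (reflectVar k l hkl f) := by
  rw [identifyVar, reflectVar, AlgEquiv.ofAlgHom_apply, substVar_substVar (hbc := by simp [hkl])]
  simp [hkl]

theorem X_sub_X_dvd_iff (hkl : k ≠ l) {f : MvPowerSeries σ R} :
    X k - X l ∣ f ↔ identifyVar k l f = 0 := by
  rw [← map_dvd_iff (reflectVar k l hkl), reflectVar_X_sub_X, X_dvd_iff_substVar_zero_eq_zero,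
    identifyVar_eq_substVar_zero_reflectVar hkl]

theorem X_sub_X_dvd_of_dvd_mul (hkl : k ≠ l) {i j : σ}
    (hij : (if i = l then k else i) ≠ (if j = l then k else j)) {g : MvPowerSeries σ R}
    (h : X k - X l ∣ (X i - X j) * g) : X k - X l ∣ g := by
  rw [X_sub_X_dvd_iff hkl] at h ⊢
  rw [map_mul, map_sub, identifyVar_X, identifyVar_X, mul_comm] at h
  exact (mul_right_mem_nonZeroDivisors_eq_zero_iff (X_sub_X_mem_nonZeroDivisors hij)).1 h

end TwoVariables

section Vandermonde

variable {σ : Type*} [Fintype σ] [LinearOrder σ] [LocallyFiniteOrderTop σ]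

theorem prod_X_sub_X_mem_nonZeroDivisors :
    ∏ i : σ, ∏ j ∈ Finset.Ioi i, (X i - X j : MvPowerSeries σ R) ∈ (MvPowerSeries σ R)⁰ :=
  Submonoid.prod_mem _ fun _ _ => Submonoid.prod_mem _ fun _ hj =>
    X_sub_X_mem_nonZeroDivisors (Finset.mem_Ioi.1 hj).ne

theorem prod_X_sub_X_dvd {f : MvPowerSeries σ R} (h : ∀ k l : σ, k < l → X k - X l ∣ f) :
    ∏ i : σ, ∏ j ∈ Finset.Ioi i, (X i - X j : MvPowerSeries σ R) ∣ f := by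
  rw [Finset.prod_sigma']
  refine Finset.prod_dvd_of_forall_dvd_of_pairwise ?_ fun x hx => h _ _ (by simpa using hx)
  rintro ⟨i, j⟩ hij ⟨k, l⟩ hkl hne g hg
  simp only [Finset.coe_sigma, Set.mem_sigma_iff, Finset.coe_univ, Set.mem_univ,
    Finset.coe_Ioi, Set.mem_Ioi, true_and] at hij hkl
  refine X_sub_X_dvd_of_dvd_mul hij.ne ?_ hg
  split_ifs with hk hl hl
  · order
  · intro h; order
  · rintro rfl; simp_all
  · exact hkl.ne

end Vandermonde

end MvPowerSeries

section evalAtVar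

variable {R : Type*} [CommRing R] {σ : Type*} [DecidableEq σ]

theorem evalAtVar_eq_subst (i : σ) (p : PowerSeries R) :
    evalAtVar i p = PowerSeries.subst (X i : MvPowerSeries σ R) p := by
  ext m
  rw [PowerSeries.coeff_subst_single]
  change ite _ _ _ = _
  congr 1
  refine propext ⟨fun h => ?_, fun h j hj => by rw [h, Finsupp.single_eq_of_ne hj]⟩
  ext j
  rcases eq_or_ne j i with rfl | hj
  · simp
  · rw [h j hj, Finsupp.single_eq_of_ne hj]

theorem identifyVar_evalAtVar (k l i : σ) (p : PowerSeries R) :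
    identifyVar k l (evalAtVar i p) = evalAtVar (if i = l then k else i) p := by
  rw [evalAtVar_eq_subst, evalAtVar_eq_subst, identifyVar, substVar_apply, PowerSeries.subst_def,
    PowerSeries.subst_def, subst_comp_subst_apply (PowerSeries.HasSubst.X i).const
      (hasSubst_update_X l (constantCoeff_X k))]
  simp only [subst_X (hasSubst_update_X l (constantCoeff_X k)), Function.update_apply]
  split_ifs <;> rfl

theorem X_sub_X_dvd_det {ι : Type*} [Fintype ι] [DecidableEq ι]
    (M : Matrix ι ι (MvPowerSeries σ R)) (p : ι → PowerSeries R) {a b : ι} (hab : a ≠ b)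
    {k l : σ} (hkl : k ≠ l) (ha : ∀ j, M a j = evalAtVar k (p j))
    (hb : ∀ j, M b j = evalAtVar l (p j)) : X k - X l ∣ M.det := by
  rw [X_sub_X_dvd_iff hkl, AlgHom.map_det]
  refine Matrix.det_zero_of_row_eq hab (funext fun j => ?_)
  simp [AlgHom.mapMatrix_apply, ha, hb, identifyVar_evalAtVar, hkl]

end evalAtVar

theorem stmt4_general {B : Type*} [CommRing B] (n r : ℕ) (hr : r ≤ n)
    (p : Fin (n + 1) → PowerSeries B)
    (M : Matrix (Fin (n + 1)) (Fin (n + 1)) (MvPowerSeries (Fin (r + 1)) B))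
    (hrows : ∀ i : Fin (n + 1), ∀ h : (i : ℕ) < r + 1, ∀ j : Fin (n + 1),
      M i j = evalAtVar (⟨(i : ℕ), h⟩ : Fin (r + 1)) (p j)) :
    ∃! g : MvPowerSeries (Fin (r + 1)) B,
      M.det = g * ∏ i : Fin (r + 1), ∏ j ∈ Finset.Ioi i,
        (MvPowerSeries.X i - MvPowerSeries.X j) := by
  have hrow (i : Fin (r + 1)) (j : Fin (n + 1)) :
      M (i.castLE (by omega)) j = evalAtVar i (p j) :=
    hrows _ i.isLt j
  have hdvd (k l : Fin (r + 1)) (hkl : k < l) : X k - X l ∣ M.det :=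
    X_sub_X_dvd_det M p ((Fin.castLE_injective _).ne hkl.ne) hkl.ne (hrow k) (hrow l)
  obtain ⟨g, hg⟩ := prod_X_sub_X_dvd hdvd
  have hV := prod_X_sub_X_mem_nonZeroDivisors (σ := Fin (r + 1)) (R := B)
  refine ⟨g, hg.trans (mul_comm _ _), fun g' hg' => ?_⟩
  exact (mul_cancel_right_mem_nonZeroDivisors hV).1 (hg'.symm.trans (hg.trans (mul_comm _ _)))

/-- Let `M` be an `(n+1)×(n+1)` matrix over `B[[x_0,…,x_r]]` whose rows
`0,…,r` are `(p_0(x_i),…,p_n(x_i))` and whose remaining rows are constant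
(entries in `B`). Then there is a unique `g ∈ B[[x_0,…,x_r]]` with
`det M = g ⬝ ∏_{0 ≤ i < j ≤ r} (x_i - x_j)`. -/
theorem stmt4 {B : Type*} [CommRing B] (n r : ℕ) (hr : r ≤ n)
    (p : Fin (n + 1) → PowerSeries B)
    (M : Matrix (Fin (n + 1)) (Fin (n + 1)) (MvPowerSeries (Fin (r + 1)) B))
    (hrows : ∀ i : Fin (n + 1), ∀ h : (i : ℕ) < r + 1, ∀ j : Fin (n + 1),
      M i j = evalAtVar (⟨(i : ℕ), h⟩ : Fin (r + 1)) (p j))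
    (hconst : ∀ i : Fin (n + 1), r + 1 ≤ (i : ℕ) → ∀ j : Fin (n + 1),
      ∃ b : B, M i j = MvPowerSeries.C b) :
    ∃! g : MvPowerSeries (Fin (r + 1)) B,
      M.det = g * ∏ i : Fin (r + 1), ∏ j ∈ Finset.Ioi i,
        (MvPowerSeries.X i - MvPowerSeries.X j) :=
  stmt4_general n r hr p M hrows
end

section
/- Let C be a non-singular integral affine curve over a field k of characteristic 0 with A = k[C], and suppose the A-module Ω_{A/k} is free with basis dt for some t ∈ A. Let I = ker(μ: A⊗_k A → A). Then for every f ∈ A and every r ≥ 1 one has the Taylor congruence δ(f) ≡ f'·δ(t) + (1/2!)f''·δ(t)² + ... + (1/r!)f^{(r)}·δ(t)^r modulo I^{r+1}, where f' = df/dt and f^{(i)} are iterated derivatives, and A acts on A⊗A through the second factor. -/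
/-!
Let `B = (A ⊗ A) / I^{r+1}` and let `u` be the class of `δ(t)`, so `u^{r+1} = 0`. Besides
`a ↦ a ⊗ 1`, the truncated exponential `a ↦ ∑_{i ≤ r} (1/i!) (1 ⊗ a^{(i)}) u^i` is a `k`-algebra
map `A → B` (Leibniz rule). The two maps agree at `t` and modulo the nilpotent ideal `I B`.
Since `dt` spans `Ω_{A/k}`, `A` is formally unramified over `k[t]`, so such maps coincide;
evaluating at `f` gives the congruence.
-/

open scoped TensorProduct

universe u

open scoped Nat
open Finset

theorem sum_range_mul_sum_range_of_pow_eq_zero {B : Type*} [CommSemiring B] {u : B} {N : ℕ}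
    (hu : u ^ N = 0) (f g : ℕ → B) :
    (∑ i ∈ range N, f i * u ^ i) * (∑ j ∈ range N, g j * u ^ j) =
      ∑ n ∈ range N, (∑ p ∈ antidiagonal n, f p.1 * g p.2) * u ^ n := by
  set F : ℕ → ℕ → B := fun i j => f i * g j * u ^ (i + j)
  calc (∑ i ∈ range N, f i * u ^ i) * (∑ j ∈ range N, g j * u ^ j)
      = ∑ i ∈ range N, ∑ j ∈ range N, F i j := by
        rw [sum_mul_sum]
        exact sum_congr rfl fun i _ => sum_congr rfl fun j _ => by ring
    _ = ∑ i ∈ range N, ∑ j ∈ range (N - i), F i j := by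
        refine sum_congr rfl fun i _ => (sum_subset (range_subset_range.2 (N.sub_le i)) ?_).symm
        intro j hjN hj
        rw [mem_range] at hjN hj
        simp only [F, pow_eq_zero_of_le (show N ≤ i + j by omega) hu, mul_zero]
    _ = ∑ n ∈ range N, ∑ k ∈ range (n + 1), F k (n - k) := (sum_range_diag_flip N F).symm
    _ = ∑ n ∈ range N, (∑ p ∈ antidiagonal n, f p.1 * g p.2) * u ^ n := by
        refine sum_congr rfl fun n _ => ?_
        rw [← Nat.sum_antidiagonal_eq_sum_range_succ F, sum_mul]
        refine sum_congr rfl fun p hp => ?_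
        rw [← mem_antidiagonal.1 hp]

namespace Derivation

section

variable {R A : Type*} [CommSemiring R] [CommSemiring A] [Algebra R A] (D : Derivation R A A)

theorem pow_apply_mul (n : ℕ) (a b : A) :
    ((D : Module.End R A) ^ n) (a * b) = ∑ p ∈ antidiagonal n,
      n.choose p.1 • (((D : Module.End R A) ^ p.1) a * ((D : Module.End R A) ^ p.2) b) := by
  induction n with
  | zero => simp
  | succ n ih =>
    rw [sum_antidiagonal_choose_succ_nsmul
      (fun i j => ((D : Module.End R A) ^ i) a * ((D : Module.End R A) ^ j) b) n]
    simp only [pow_succ', Module.End.mul_apply, ih, map_sum, map_nsmul, coeFn_coe, leibniz,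
      smul_eq_mul, smul_add, sum_add_distrib]
    congr 1
    refine sum_congr rfl fun p hp => ?_
    rw [n.choose_symm_of_eq_add (mem_antidiagonal.1 hp).symm, mul_comm]

theorem pow_succ_apply_eq_zero {a : A} (ha : D a = 0) (n : ℕ) :
    ((D : Module.End R A) ^ (n + 1)) a = 0 := by
  rw [pow_succ, Module.End.mul_apply, coeFn_coe, ha, map_zero]

end

variable {k A : Type*} [Field k] [CharZero k] [CommSemiring A] [Algebra k A] (D : Derivation k A A)

theorem inv_factorial_smul_pow_apply_mul (n : ℕ) (a b : A) :
    (n ! : k)⁻¹ • ((D : Module.End k A) ^ n) (a * b) = ∑ p ∈ antidiagonal n,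
      ((p.1 ! : k)⁻¹ • ((D : Module.End k A) ^ p.1) a) *
        ((p.2 ! : k)⁻¹ • ((D : Module.End k A) ^ p.2) b) := by
  rw [pow_apply_mul, smul_sum]
  refine sum_congr rfl fun p hp => ?_
  obtain rfl := mem_antidiagonal.1 hp
  rw [smul_mul_smul_comm, ← Nat.cast_smul_eq_nsmul k, smul_smul, Nat.cast_add_choose]
  have : ((p.1 + p.2)! : k) ≠ 0 := Nat.cast_ne_zero.2 (Nat.factorial_ne_zero _)
  congr 1
  field_simp

section

variable {B : Type*} [CommSemiring B] [Algebra k B] (τ : A →ₐ[k] B) {u : B} {N : ℕ}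
  (hu : u ^ (N + 1) = 0)

/-- `τ ∘ exp (u • D)`, which is a finite sum because `u` is nilpotent. -/
noncomputable def truncatedExp : A →ₐ[k] B where
  toFun a := ∑ i ∈ range (N + 1),
    algebraMap k B (i ! : k)⁻¹ * τ (((D : Module.End k A) ^ i) a) * u ^ i
  map_zero' := by simp
  map_add' a b := by simp only [map_add, mul_add, add_mul, sum_add_distrib]
  map_one' := by
    rw [sum_range_succ', sum_eq_zero fun i _ => by
      rw [D.pow_succ_apply_eq_zero D.map_one_eq_zero, map_zero, mul_zero, zero_mul]]
    simp
  commutes' c := by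
    rw [sum_range_succ',
      sum_eq_zero fun i _ => by
        rw [D.pow_succ_apply_eq_zero (D.map_algebraMap c), map_zero, mul_zero, zero_mul]]
    simp
  map_mul' a b := by
    rw [sum_range_mul_sum_range_of_pow_eq_zero hu]
    refine sum_congr rfl fun n _ => ?_
    have h := congrArg τ (D.inv_factorial_smul_pow_apply_mul n a b)
    simp only [Algebra.smul_def, map_sum, map_mul, AlgHom.commutes] at h
    rw [h]

theorem truncatedExp_apply (a : A) : D.truncatedExp τ hu a =
    ∑ i ∈ range (N + 1), algebraMap k B (i ! : k)⁻¹ * τ (((D : Module.End k A) ^ i) a) * u ^ i :=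
  rfl

theorem truncatedExp_apply_of_apply_eq_one {t : A} (ht : D t = 1) :
    D.truncatedExp τ hu t = τ t + u := by
  cases N with
  | zero =>
    rw [zero_add, pow_one] at hu
    simp [truncatedExp_apply, hu]
  | succ M =>
    rw [truncatedExp_apply, sum_range_succ', sum_range_succ',
      sum_eq_zero fun i _ => by
        rw [pow_succ, Module.End.mul_apply, coeFn_coe, ht,
          D.pow_succ_apply_eq_zero D.map_one_eq_zero, map_zero, mul_zero, zero_mul]]
    simp [ht, add_comm]

end

theorem truncatedExp_sub_mem_span {B : Type*} [CommRing B] [Algebra k B] (τ : A →ₐ[k] B) {u : B}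
    {N : ℕ} (hu : u ^ (N + 1) = 0) (a : A) : D.truncatedExp τ hu a - τ a ∈ Ideal.span {u} := by
  rw [truncatedExp_apply, sum_range_succ']
  have h0 : algebraMap k B (0 ! : k)⁻¹ * τ (((D : Module.End k A) ^ 0) a) * u ^ 0 = τ a := by simp
  rw [h0, add_sub_cancel_right]
  refine Ideal.sum_mem _ fun i _ => ?_
  rw [pow_succ u i, ← mul_assoc]
  exact Ideal.mul_mem_left _ _ (Ideal.mem_span_singleton_self u)

end Derivation

theorem Algebra.FormallyUnramified.of_forall_D_eq_smul_D_algebraMap {R S A : Type*} [CommRing R]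
    [CommRing S] [CommRing A] [Algebra R S] [Algebra R A] [Algebra S A] [IsScalarTower R S A]
    (s : S) (h : ∀ a : A, ∃ c : A, KaehlerDifferential.D R A a =
      c • KaehlerDifferential.D R A (algebraMap S A s)) :
    Algebra.FormallyUnramified S A := by
  have hmap (a : A) : KaehlerDifferential.map R S A A (KaehlerDifferential.D R A a) =
      KaehlerDifferential.D S A a :=
    KaehlerDifferential.map_D R S A A a
  have hD (a : A) : KaehlerDifferential.D S A a = 0 := by
    obtain ⟨c, hc⟩ := h a
    rw [← hmap, hc, map_smul, hmap, Derivation.map_algebraMap, smul_zero]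
  have htop : (⊥ : Submodule A Ω[A⁄S]) = ⊤ := by
    rw [eq_comm, eq_bot_iff, ← KaehlerDifferential.span_range_derivation, Submodule.span_le]
    rintro _ ⟨a, rfl⟩
    exact hD a
  exact ⟨(Submodule.subsingleton_iff A).1 (subsingleton_iff_bot_eq_top.1 htop)⟩

theorem Algebra.FormallyUnramified.ringHom_ext {S A B : Type*} [CommRing S] [CommRing A]
    [CommRing B] [Algebra S A] [Algebra.FormallyUnramified S A] {I : Ideal B} (hI : IsNilpotent I)
    {g₁ g₂ : A →+* B} (hS : g₁.comp (algebraMap S A) = g₂.comp (algebraMap S A))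
    (H : ∀ a, g₁ a - g₂ a ∈ I) : g₁ = g₂ := by
  let _ : Algebra S B := (g₁.comp (algebraMap S A)).toAlgebra
  let g₁' : A →ₐ[S] B := { g₁ with commutes' := fun _ => rfl }
  let g₂' : A →ₐ[S] B := { g₂ with commutes' := fun s => (RingHom.congr_fun hS s).symm }
  have h : g₁' = g₂' := Algebra.FormallyUnramified.ext I hI fun a => Ideal.Quotient.eq.2 (H a)
  exact RingHom.ext (AlgHom.congr_fun h)

namespace KaehlerDifferential

variable {k A : Type*} [CommRing k] [CommRing A] [Algebra k A]

theorem algHom_ext_of_forall_D_eq_smul {B : Type*} [CommRing B] [Algebra k B] (t : A)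
    (h : ∀ a : A, ∃ c : A, D k A a = c • D k A t)
    {I : Ideal B} (hI : IsNilpotent I) {g₁ g₂ : A →ₐ[k] B} (ht : g₁ t = g₂ t)
    (H : ∀ a, g₁ a - g₂ a ∈ I) : g₁ = g₂ := by
  have := Algebra.FormallyUnramified.of_forall_D_eq_smul_D_algebraMap
    (S := AlgHom.equalizer g₁ g₂) ⟨t, ht⟩ h
  exact AlgHom.coe_ringHom_injective <| Algebra.FormallyUnramified.ringHom_ext hI
    (RingHom.ext fun s : AlgHom.equalizer g₁ g₂ => s.2) H

/-- The derivation `d/dt`. -/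
def derivationOfEqSmulD (t : A) (hDt : Function.Injective fun c : A => c • D k A t)
    (d : Module.End k A) (hd : ∀ f : A, D k A f = d f • D k A t) : Derivation k A A where
  toLinearMap := d
  map_one_eq_zero' := hDt <| by
    change d 1 • D k A t = (0 : A) • D k A t
    rw [← hd, Derivation.map_one_eq_zero, zero_smul]
  leibniz' a b := hDt <| by
    change d (a * b) • D k A t = (a * d b + b * d a) • D k A t
    rw [← hd, Derivation.leibniz, hd a, hd b, smul_smul, smul_smul, ← add_smul]

theorem sub_one_tmul_mem_ideal (a : A) : a ⊗ₜ[k] (1 : A) - (1 : A) ⊗ₜ[k] a ∈ ideal k A := by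
  rw [← neg_sub]
  exact (ideal k A).neg_mem_iff.2 (one_smul_sub_smul_one_mem_ideal k a)

end KaehlerDifferential

theorem KaehlerDifferential.tmul_one_sub_sum_mem_ideal_pow {k A : Type*} [Field k] [CharZero k]
    [CommRing A] [Algebra k A] (t : A)
    (h : ∀ a : A, ∃ c : A, KaehlerDifferential.D k A a = c • KaehlerDifferential.D k A t)
    (D : Derivation k A A) (hDt : D t = 1) (r : ℕ) (f : A) :
    f ⊗ₜ[k] (1 : A) - ∑ i ∈ range (r + 1), algebraMap k (A ⊗[k] A) (i ! : k)⁻¹ *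
        ((1 : A) ⊗ₜ[k] ((D : Module.End k A) ^ i) f) * (t ⊗ₜ[k] (1 : A) - (1 : A) ⊗ₜ[k] t) ^ i
      ∈ ideal k A ^ (r + 1) := by
  let I := ideal k A
  let Q := Ideal.Quotient.mkₐ k (I ^ (r + 1))
  let δt := t ⊗ₜ[k] (1 : A) - (1 : A) ⊗ₜ[k] t
  have hδt : δt ∈ I := sub_one_tmul_mem_ideal t
  have hu : Q δt ^ (r + 1) = 0 := by
    rw [← map_pow, Ideal.Quotient.mkₐ_eq_mk, Ideal.Quotient.eq_zero_iff_mem]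
    exact Ideal.pow_mem_pow hδt _
  let τ := Q.comp Algebra.TensorProduct.includeRight
  have hnil : IsNilpotent (I.map Q) :=
    ⟨r + 1, by rw [← Ideal.map_pow]; exact Ideal.map_quotient_self _⟩
  have key : Q.comp Algebra.TensorProduct.includeLeft = D.truncatedExp τ hu := by
    refine algHom_ext_of_forall_D_eq_smul t h hnil ?_ fun a => ?_
    · rw [D.truncatedExp_apply_of_apply_eq_one τ hu hDt]
      change Q (t ⊗ₜ 1) = Q (1 ⊗ₜ t) + Q δt
      rw [← map_add, add_sub_cancel]
    · have h1 : Q (a ⊗ₜ 1) - τ a ∈ I.map Q := by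
        rw [show Q (a ⊗ₜ 1) - τ a = Q (a ⊗ₜ 1 - 1 ⊗ₜ a) from (map_sub _ _ _).symm]
        exact Ideal.mem_map_of_mem _ (sub_one_tmul_mem_ideal a)
      have h2 : D.truncatedExp τ hu a - τ a ∈ I.map Q :=
        Ideal.span_singleton_le_iff_mem _ |>.2 (Ideal.mem_map_of_mem _ hδt)
          (D.truncatedExp_sub_mem_span τ hu a)
      have h3 := sub_mem h1 h2
      rwa [sub_sub_sub_cancel_right] at h3
  refine Ideal.Quotient.eq.1 ?_
  change (Q.comp Algebra.TensorProduct.includeLeft) f = _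
  rw [key, D.truncatedExp_apply]
  simp only [map_sum, map_mul, map_pow]
  rfl

theorem stmt8_general (k : Type u) [Field k] [CharZero k]
    (A : Type u) [CommRing A] [Algebra k A]
    (t : A)
    (hfree : ∀ ω : Ω[A⁄k], ∃! c : A, ω = c • KaehlerDifferential.D k A t)
    (d : Module.End k A)
    (hd : ∀ f : A, KaehlerDifferential.D k A f =
      d f • KaehlerDifferential.D k A t) :
    ∀ (f : A) (r : ℕ), 1 ≤ r →
      letI δ : A → A ⊗[k] A := fun p => p ⊗ₜ[k] (1 : A) - (1 : A) ⊗ₜ[k] p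
      letI I : Ideal (A ⊗[k] A) :=
        RingHom.ker (Algebra.TensorProduct.lmul' k (S := A)).toRingHom
      δ f - ∑ i ∈ Finset.Icc 1 r,
          algebraMap k (A ⊗[k] A) ((Nat.factorial i : k)⁻¹) *
            ((1 : A) ⊗ₜ[k] ((d ^ i) f)) * (δ t) ^ i
        ∈ I ^ (r + 1) := by
  intro f r _
  have hDt : Function.Injective fun c : A => c • KaehlerDifferential.D k A t :=
    fun a b h => (hfree _).unique rfl h
  let D := KaehlerDifferential.derivationOfEqSmulD t hDt d hd
  have hDt1 : D t = 1 := hDt ((hd t).symm.trans (one_smul A _).symm)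
  have h := KaehlerDifferential.tmul_one_sub_sum_mem_ideal_pow t (fun a => ⟨d a, hd a⟩) D hDt1 r f
  rw [sum_range_eq_add_Ico _ (show 0 < r + 1 by omega), Ico_add_one_right_eq_Icc] at h
  simp only [pow_zero, Nat.factorial_zero, Nat.cast_one, inv_one, map_one, one_mul, mul_one,
    Module.End.one_apply] at h
  beta_reduce
  rwa [sub_add_eq_sub_sub] at h

/-- Taylor congruence: for the coordinate ring `A` of a non-singular integral
affine curve over a field `k` of characteristic `0` whose Kähler differentials
are free on `dt`, and `I = ker(μ : A ⊗ A → A)`, every `f ∈ A` and `r ≥ 1`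
satisfy `δ(f) ≡ Σ_{i=1}^r (1/i!) f^{(i)} · δ(t)^i  (mod I^{r+1})`, where the
`A`-action on `A ⊗ A` is through the second factor and `f^{(i)} = d^i f` is
the iterated `d/dt`-derivative defined by `df = f'·dt`. -/
theorem stmt8 (k : Type u) [Field k] [CharZero k]
    (A : Type u) [CommRing A] [IsDomain A] [Algebra k A]
    [Algebra.FiniteType k A] [Algebra.Smooth k A]
    (hdim : ringKrullDim A = 1)
    (t : A)
    (hfree : ∀ ω : Ω[A⁄k], ∃! c : A, ω = c • KaehlerDifferential.D k A t)
    (d : Module.End k A)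
    (hd : ∀ f : A, KaehlerDifferential.D k A f =
      d f • KaehlerDifferential.D k A t) :
    ∀ (f : A) (r : ℕ), 1 ≤ r →
      letI δ : A → A ⊗[k] A := fun p => p ⊗ₜ[k] (1 : A) - (1 : A) ⊗ₜ[k] p
      letI I : Ideal (A ⊗[k] A) :=
        RingHom.ker (Algebra.TensorProduct.lmul' k (S := A)).toRingHom
      δ f - ∑ i ∈ Finset.Icc 1 r,
          algebraMap k (A ⊗[k] A) ((Nat.factorial i : k)⁻¹) *
            ((1 : A) ⊗ₜ[k] ((d ^ i) f)) * (δ t) ^ i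
        ∈ I ^ (r + 1) :=
  stmt8_general k A t hfree d hd
end

section
/- In the setting of the previous statement (smooth affine curve, Ω_{A/k} free on dt, I = ker μ ⊂ A⊗_k A): for every r ≥ 1 there exists a unique A-linear map D^{(r)}: I^r → A vanishing on I^{r+1} and sending δ(p_1)···δ(p_r) to p_1'···p_r' for all p_1,...,p_r ∈ A; moreover D^{(r)}(αβ) = μ(α)·D^{(r)}(β) for all α ∈ A⊗A and β ∈ I^r. -/
/-!
In characteristic zero, the derivation `d` integrates to the Taylor homomorphism
`T : A → A⟦X⟧`, `f ↦ ∑ dⁿf Xⁿ / n!`. Together with the constant embedding it gives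
`Φ : A ⊗ A → A⟦X⟧`, `x ⊗ y ↦ T(x) y`, whose constant term is `μ`; so `Φ` maps `Iʳ` into
`Xʳ A⟦X⟧`, and `D⁽ʳ⁾(β)` is the coefficient of `Xʳ` in `Φ(β)`. As `Φ(δ p) = p' X + O(X²)`, this
sends `δ(p₁)⋯δ(p_r)` to `p₁'⋯p_r'`. Uniqueness: the `δ(p)` generate `I`, so their `r`-fold
products generate `Iʳ`, and `D(αβ) = μ(α) D(β)` propagates values from generators to the ideal.
-/

open scoped TensorProduct

universe u

open PowerSeries

namespace PowerSeries

variable {R : Type*} [CommSemiring R]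

theorem coeff_mul_of_X_pow_dvd (F : R⟦X⟧) {G : R⟦X⟧} {n : ℕ} (h : X ^ n ∣ G) :
    coeff n (F * G) = constantCoeff F * coeff n G := by
  obtain ⟨H, rfl⟩ := h
  simp [mul_left_comm F, coeff_X_pow_mul']

theorem coeff_card_prod_of_constantCoeff_eq_zero {ι : Type*} (s : Finset ι) (F : ι → R⟦X⟧)
    (hF : ∀ i ∈ s, constantCoeff (F i) = 0) :
    coeff s.card (∏ i ∈ s, F i) = ∏ i ∈ s, coeff 1 (F i) := by
  have hX : ∀ i ∈ s, F i = X * mk fun n => coeff (n + 1) (F i) := fun i hi => by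
    conv_lhs => rw [eq_X_mul_shift_add_const (F i), hF i hi, map_zero, add_zero]
  rw [Finset.prod_congr rfl hX, Finset.prod_mul_distrib, Finset.prod_const, coeff_X_pow_mul',
    if_pos le_rfl, Nat.sub_self, coeff_zero_eq_constantCoeff, map_prod]
  simp

theorem coeff_derivative_eq_smul {k : Type*} [CommSemiring k] [Algebra k R] (F : R⟦X⟧) (n : ℕ) :
    coeff n (d⁄dX R F) = ((n + 1 : ℕ) : k) • coeff (n + 1) F := by
  rw [coeff_derivative, Nat.cast_smul_eq_nsmul, nsmul_eq_mul, mul_comm]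
  push_cast
  rfl

end PowerSeries

namespace Derivation

open scoped Nat

variable {k A : Type*} [Field k] [CommRing A] [Algebra k A] (D : Derivation k A A)

noncomputable def taylorSeries (f : A) : A⟦X⟧ :=
  PowerSeries.mk fun n => (n ! : k)⁻¹ • ((D : A →ₗ[k] A) ^ n) f

@[simp]
theorem coeff_taylorSeries (f : A) (n : ℕ) :
    coeff n (D.taylorSeries f) = (n ! : k)⁻¹ • ((D : A →ₗ[k] A) ^ n) f :=
  coeff_mk _ _

@[simp]
theorem constantCoeff_taylorSeries (f : A) : constantCoeff (D.taylorSeries f) = f := by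
  simp [← coeff_zero_eq_constantCoeff]

theorem taylorSeries_add (f g : A) :
    D.taylorSeries (f + g) = D.taylorSeries f + D.taylorSeries g := by
  ext n
  simp

theorem taylorSeries_smul (c : k) (f : A) :
    D.taylorSeries (c • f) = c • D.taylorSeries f := by
  ext n
  simp [smul_comm c]

theorem taylorSeries_one : D.taylorSeries 1 = 1 := by
  ext (_ | n)
  · simp
  · simp [pow_succ, coeff_one]

theorem derivative_taylorSeries [CharZero k] (f : A) :
    d⁄dX A (D.taylorSeries f) = D.taylorSeries (D f) := by
  ext n
  have hn : ((n + 1 : ℕ) : k) ≠ 0 := Nat.cast_ne_zero.mpr n.succ_ne_zero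
  rw [coeff_derivative_eq_smul (k := k), coeff_taylorSeries, coeff_taylorSeries, smul_smul,
    Nat.factorial_succ, Nat.cast_mul, mul_inv, ← mul_assoc, mul_inv_cancel₀ hn, one_mul, pow_succ,
    Module.End.mul_apply]
  rfl

theorem taylorSeries_mul [CharZero k] (f g : A) :
    D.taylorSeries (f * g) = D.taylorSeries f * D.taylorSeries g := by
  ext n
  induction n generalizing f g with
  | zero => simp
  | succ n ih =>
    have hn : ((n + 1 : ℕ) : k) ≠ 0 := Nat.cast_ne_zero.mpr n.succ_ne_zero
    apply smul_right_injective A hn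
    simp only [← coeff_derivative_eq_smul]
    rw [derivative_taylorSeries, leibniz, leibniz, taylorSeries_add, map_add, map_add,
      smul_eq_mul, smul_eq_mul, smul_eq_mul, smul_eq_mul, ih, ih, derivative_taylorSeries,
      derivative_taylorSeries]

noncomputable def taylorAlgHom [CharZero k] : A →ₐ[k] A⟦X⟧ :=
  AlgHom.ofLinearMap
    { toFun := D.taylorSeries
      map_add' := D.taylorSeries_add
      map_smul' := D.taylorSeries_smul }
    D.taylorSeries_one D.taylorSeries_mul

@[simp]
theorem taylorAlgHom_apply [CharZero k] (f : A) : D.taylorAlgHom f = D.taylorSeries f := rfl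

end Derivation

open scoped Pointwise

namespace Set

theorem range_pow {α M : Type*} [CommMonoid M] (f : α → M) (n : ℕ) :
    range f ^ n = range fun p : Fin n → α => ∏ i, f (p i) := by
  ext x
  simp only [mem_pow, List.prod_ofFn, mem_range]
  constructor
  · rintro ⟨g, rfl⟩
    choose p hp using fun i => (g i).2
    exact ⟨p, Finset.prod_congr rfl fun i _ => hp i⟩
  · rintro ⟨p, rfl⟩
    exact ⟨fun i => ⟨f (p i), mem_range_self _⟩, rfl⟩

end Set

theorem Ideal.addMonoidHom_ext_of_span_eq {R S : Type*} [CommSemiring R] [Semiring S]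
    (φ : R →+* S) {J : Ideal R} {s : Set R} (hJ : Ideal.span s = J) {f g : J →+ S}
    (hf : ∀ (α : R) (β : J), f ⟨α * β, J.mul_mem_left α β.2⟩ = φ α * f β)
    (hg : ∀ (α : R) (β : J), g ⟨α * β, J.mul_mem_left α β.2⟩ = φ α * g β)
    (hfg : ∀ β : J, (β : R) ∈ s → f β = g β) : f = g := by
  subst hJ
  ext ⟨x, hx⟩
  induction hx using Submodule.span_induction with
  | mem y hy => exact hfg ⟨y, _⟩ hy
  | zero => exact (map_zero f).trans (map_zero g).symm
  | add y z hy hz ihy ihz =>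
    exact (map_add f ⟨y, hy⟩ ⟨z, hz⟩).trans ((congrArg₂ _ ihy ihz).trans (map_add g _ _).symm)
  | smul α y hy ih => exact (hf α ⟨y, hy⟩).trans ((congrArg _ ih).trans (hg α ⟨y, hy⟩).symm)

theorem KaehlerDifferential.ideal_pow_eq_span (k A : Type*) [CommRing k] [CommRing A]
    [Algebra k A] (r : ℕ) :
    Ideal.span (Set.range fun p : Fin r → A => ∏ i, (p i ⊗ₜ[k] (1 : A) - 1 ⊗ₜ[k] p i)) =
      KaehlerDifferential.ideal k A ^ r := by
  have hδ : Ideal.span (Set.range fun p : A => p ⊗ₜ[k] (1 : A) - 1 ⊗ₜ[k] p) =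
      KaehlerDifferential.ideal k A := by
    rw [← KaehlerDifferential.span_range_eq_ideal, Ideal.span, Ideal.span, ← Submodule.span_neg,
      Set.neg_range]
    simp only [neg_sub]
  rw [← hδ, Ideal.span, Submodule.span_pow, Set.range_pow]

namespace Derivation

variable {k A : Type*} [Field k] [CharZero k] [CommRing A] [Algebra k A] (D : Derivation k A A)

noncomputable def tensorTaylor : A ⊗[k] A →ₐ[k] A⟦X⟧ :=
  Algebra.TensorProduct.productMap D.taylorAlgHom (IsScalarTower.toAlgHom k A A⟦X⟧)

theorem tensorTaylor_tmul (x y : A) : D.tensorTaylor (x ⊗ₜ y) = D.taylorSeries x * C y := by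
  simp [tensorTaylor]

theorem constantCoeff_tensorTaylor (x : A ⊗[k] A) :
    constantCoeff (D.tensorTaylor x) = Algebra.TensorProduct.lmul' k x := by
  induction x using TensorProduct.induction_on with
  | zero => simp
  | tmul x y => simp [tensorTaylor_tmul]
  | add x y hx hy => simp only [map_add, hx, hy]

theorem X_pow_dvd_tensorTaylor {m : ℕ} {x : A ⊗[k] A}
    (hx : x ∈ KaehlerDifferential.ideal k A ^ m) : X ^ m ∣ D.tensorTaylor x := by
  have hI : KaehlerDifferential.ideal k A ≤
      (Ideal.span {(X : A⟦X⟧)}).comap D.tensorTaylor := fun y hy => by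
    rw [Ideal.mem_comap, Ideal.mem_span_singleton, X_dvd_iff, constantCoeff_tensorTaylor]
    exact hy
  have := Ideal.le_comap_pow _ m (Ideal.pow_right_mono hI m hx)
  rwa [Ideal.mem_comap, Ideal.span_singleton_pow, Ideal.mem_span_singleton] at this

theorem coeff_one_tensorTaylor_sub (p : A) :
    coeff 1 (D.tensorTaylor (p ⊗ₜ 1 - 1 ⊗ₜ p)) = D p := by
  simp [tensorTaylor_tmul, taylorSeries_one]

noncomputable def diagonalCoeff (r : ℕ) : ↥(KaehlerDifferential.ideal k A ^ r) →+ A where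
  toFun β := coeff r (D.tensorTaylor β)
  map_zero' := by simp
  map_add' β γ := by simp

theorem diagonalCoeff_eq_zero_of_mem {r : ℕ} (β : ↥(KaehlerDifferential.ideal k A ^ r))
    (hβ : (β : A ⊗[k] A) ∈ KaehlerDifferential.ideal k A ^ (r + 1)) : D.diagonalCoeff r β = 0 :=
  X_pow_dvd_iff.mp (D.X_pow_dvd_tensorTaylor hβ) r r.lt_succ_self

theorem diagonalCoeff_mul {r : ℕ} (α : A ⊗[k] A) (β : ↥(KaehlerDifferential.ideal k A ^ r)) :
    D.diagonalCoeff r ⟨α * β, Ideal.mul_mem_left _ α β.2⟩ =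
      Algebra.TensorProduct.lmul' k α * D.diagonalCoeff r β := by
  simp only [diagonalCoeff, AddMonoidHom.coe_mk, ZeroHom.coe_mk, map_mul,
    coeff_mul_of_X_pow_dvd _ (D.X_pow_dvd_tensorTaylor β.2), constantCoeff_tensorTaylor]

theorem diagonalCoeff_prod {r : ℕ} (p : Fin r → A)
    (h : ∏ i, (p i ⊗ₜ[k] (1 : A) - 1 ⊗ₜ[k] p i) ∈ KaehlerDifferential.ideal k A ^ r) :
    D.diagonalCoeff r ⟨∏ i, (p i ⊗ₜ[k] (1 : A) - 1 ⊗ₜ[k] p i), h⟩ = ∏ i, D (p i) := by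
  have hδ (q : A) : constantCoeff (D.tensorTaylor (q ⊗ₜ 1 - 1 ⊗ₜ q)) = 0 := by
    simp [constantCoeff_tensorTaylor]
  have := coeff_card_prod_of_constantCoeff_eq_zero Finset.univ
    (fun i => D.tensorTaylor (p i ⊗ₜ 1 - 1 ⊗ₜ p i)) fun i _ => hδ (p i)
  simp only [Finset.card_univ, Fintype.card_fin, coeff_one_tensorTaylor_sub] at this
  simpa only [diagonalCoeff, AddMonoidHom.coe_mk, ZeroHom.coe_mk, map_prod] using this

end Derivation

theorem Derivation.leibniz_of_eq_smul {R A M : Type*} [CommRing R] [CommRing A] [Algebra R A]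
    [AddCommGroup M] [Module A M] [Module R M] [IsScalarTower R A M] (D : Derivation R A M)
    {m : M} (hm : Function.Injective fun c : A => c • m) {d : A → A} (hd : ∀ f, D f = d f • m)
    (f g : A) : d (f * g) = f * d g + g * d f :=
  hm <| by
    dsimp only
    rw [← hd, D.leibniz, hd, hd, smul_smul, smul_smul, add_smul]

theorem stmt9_general (k : Type u) [Field k] [CharZero k]
    (A : Type u) [CommRing A] [Algebra k A]
    (t : A)
    (hfree : ∀ ω : Ω[A⁄k], ∃! c : A, ω = c • KaehlerDifferential.D k A t)
    (d : Module.End k A)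
    (hd : ∀ f : A, KaehlerDifferential.D k A f =
      d f • KaehlerDifferential.D k A t)
    (r : ℕ) :
    letI δ : A → A ⊗[k] A := fun p => p ⊗ₜ[k] (1 : A) - (1 : A) ⊗ₜ[k] p
    letI μmap := Algebra.TensorProduct.lmul' k (S := A)
    letI I : Ideal (A ⊗[k] A) := RingHom.ker μmap.toRingHom
    ∃ D : ↥(I ^ r) →+ A,
      ((∀ β : ↥(I ^ r), (β : A ⊗[k] A) ∈ I ^ (r + 1) → D β = 0) ∧
        (∀ (p : Fin r → A) (h : ∏ i, δ (p i) ∈ I ^ r),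
          D ⟨∏ i, δ (p i), h⟩ = ∏ i, d (p i)) ∧
        (∀ (α : A ⊗[k] A) (β : ↥(I ^ r)),
          D ⟨α * (β : A ⊗[k] A), Ideal.mul_mem_left _ α β.2⟩ =
            μmap α * D β)) ∧
      ∀ D' : ↥(I ^ r) →+ A,
        ((∀ β : ↥(I ^ r), (β : A ⊗[k] A) ∈ I ^ (r + 1) → D' β = 0) ∧
          (∀ (p : Fin r → A) (h : ∏ i, δ (p i) ∈ I ^ r),
            D' ⟨∏ i, δ (p i), h⟩ = ∏ i, d (p i)) ∧
          (∀ (α : A ⊗[k] A) (β : ↥(I ^ r)),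
            D' ⟨α * (β : A ⊗[k] A), Ideal.mul_mem_left _ α β.2⟩ =
              μmap α * D' β)) →
        D' = D := by
  have hinj : Function.Injective fun c : A => c • KaehlerDifferential.D k A t :=
    fun c c' h => (hfree (c • KaehlerDifferential.D k A t)).unique rfl h
  let D : Derivation k A A :=
    Derivation.mk' d ((KaehlerDifferential.D k A).leibniz_of_eq_smul hinj hd)
  refine ⟨D.diagonalCoeff r,
    ⟨D.diagonalCoeff_eq_zero_of_mem, D.diagonalCoeff_prod, D.diagonalCoeff_mul⟩, ?_⟩
  rintro D' ⟨-, hprod', hmul'⟩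
  refine Ideal.addMonoidHom_ext_of_span_eq (Algebra.TensorProduct.lmul' k).toRingHom
    (KaehlerDifferential.ideal_pow_eq_span k A r) hmul' D.diagonalCoeff_mul ?_
  rintro ⟨_, _⟩ ⟨p, rfl⟩
  exact (hprod' p _).trans (D.diagonalCoeff_prod p _).symm

/-- For a smooth affine curve with `Ω_{A/k}` free on `dt` and
`I = ker(μ : A ⊗ A → A)`, for every `r ≥ 1` there is a unique additive,
`A`-linear map `D⁽ʳ⁾ : Iʳ → A` vanishing on `I^{r+1}` and sending
`δ(p₁)⋯δ(p_r)` to `p₁'⋯p_r'`; moreover `D⁽ʳ⁾(αβ) = μ(α)·D⁽ʳ⁾(β)` for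
`α ∈ A ⊗ A`, `β ∈ Iʳ` (this last property subsumes `A`-linearity for the
module structure `a·(x⊗y) = x⊗(a y)`). -/
theorem stmt9 (k : Type u) [Field k] [CharZero k]
    (A : Type u) [CommRing A] [IsDomain A] [Algebra k A]
    [Algebra.FiniteType k A] [Algebra.Smooth k A]
    (hdim : ringKrullDim A = 1)
    (t : A)
    (hfree : ∀ ω : Ω[A⁄k], ∃! c : A, ω = c • KaehlerDifferential.D k A t)
    (d : Module.End k A)
    (hd : ∀ f : A, KaehlerDifferential.D k A f =
      d f • KaehlerDifferential.D k A t)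
    (r : ℕ) (hr : 1 ≤ r) :
    letI δ : A → A ⊗[k] A := fun p => p ⊗ₜ[k] (1 : A) - (1 : A) ⊗ₜ[k] p
    letI μmap := Algebra.TensorProduct.lmul' k (S := A)
    letI I : Ideal (A ⊗[k] A) := RingHom.ker μmap.toRingHom
    ∃ D : ↥(I ^ r) →+ A,
      ((∀ β : ↥(I ^ r), (β : A ⊗[k] A) ∈ I ^ (r + 1) → D β = 0) ∧
        (∀ (p : Fin r → A) (h : ∏ i, δ (p i) ∈ I ^ r),
          D ⟨∏ i, δ (p i), h⟩ = ∏ i, d (p i)) ∧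
        (∀ (α : A ⊗[k] A) (β : ↥(I ^ r)),
          D ⟨α * (β : A ⊗[k] A), Ideal.mul_mem_left _ α β.2⟩ =
            μmap α * D β)) ∧
      ∀ D' : ↥(I ^ r) →+ A,
        ((∀ β : ↥(I ^ r), (β : A ⊗[k] A) ∈ I ^ (r + 1) → D' β = 0) ∧
          (∀ (p : Fin r → A) (h : ∏ i, δ (p i) ∈ I ^ r),
            D' ⟨∏ i, δ (p i), h⟩ = ∏ i, d (p i)) ∧
          (∀ (α : A ⊗[k] A) (β : ↥(I ^ r)),
            D' ⟨α * (β : A ⊗[k] A), Ideal.mul_mem_left _ α β.2⟩ =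
              μmap α * D' β)) →
        D' = D :=
  stmt9_general k A t hfree d hd r
end

section
/- Let A carry a discrete valuation ord_ξ, let V ⊆ A have dimension n+1 with m_ξ(V) = (m_0,...,m_n), and let q_0,...,q_n ∈ A be linearly independent with ord_ξ(q_i) ≥ m_i for all i, with strict inequality for at least one i. Then the span W of the q_i satisfies m_ξ(W) > m_ξ(V) in the componentwise partial order (i.e., (m_ξ(W))_i ≥ m_i for all i, with strict inequality somewhere). -/
open Submodule Module

section Aux

variable {k : Type*} [Field k] {A : Type*} [CommRing A] [IsDomain A] [Algebra k A]
variable {v : A → ℕ}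

private lemma aux_v_one (hmul : ∀ p q : A, p ≠ 0 → q ≠ 0 → v (p * q) = v p + v q) :
    v (1 : A) = 0 := by
  have h := hmul 1 1 one_ne_zero one_ne_zero
  rw [mul_one] at h
  omega

private lemma aux_v_smul (hmul : ∀ p q : A, p ≠ 0 → q ≠ 0 → v (p * q) = v p + v q)
    {c : k} (hc : c ≠ 0) {p : A} (hp : p ≠ 0) : c • p ≠ 0 ∧ v (c • p) = v p := by
  have hac : (algebraMap k A) c ≠ 0 := by
    intro h
    have h1 : (algebraMap k A) c * (algebraMap k A) c⁻¹ = 1 := by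
      rw [← map_mul, mul_inv_cancel₀ hc, map_one]
    rw [h, zero_mul] at h1
    exact one_ne_zero h1.symm
  have hainv : (algebraMap k A) c⁻¹ ≠ 0 := by
    intro h
    have h1 : (algebraMap k A) c * (algebraMap k A) c⁻¹ = 1 := by
      rw [← map_mul, mul_inv_cancel₀ hc, map_one]
    rw [h, mul_zero] at h1
    exact one_ne_zero h1.symm
  have hac0 : v ((algebraMap k A) c) = 0 := by
    have h := hmul _ _ hac hainv
    rw [← map_mul, mul_inv_cancel₀ hc, map_one, aux_v_one hmul] at h
    omega
  constructor
  · rw [Algebra.smul_def]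
    exact mul_ne_zero hac hp
  · rw [Algebra.smul_def, hmul _ _ hac hp, hac0, zero_add]

private lemma aux_sum_min
    (hmin : ∀ p q : A, p ≠ 0 → q ≠ 0 → p + q ≠ 0 → min (v p) (v q) ≤ v (p + q))
    {ι : Type*} [DecidableEq ι] (s : Finset ι) :
    ∀ (f : ι → A) (b : ℕ), (∀ i ∈ s, f i ≠ 0) → (∀ i ∈ s, b ≤ v (f i)) →
      (∑ i ∈ s, f i) ≠ 0 → b ≤ v (∑ i ∈ s, f i) := by
  induction s using Finset.induction_on with
  | empty => intro f b _ _ hs; simp at hs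
  | @insert a s ha ih =>
    intro f b h0 hb hs
    rw [Finset.sum_insert ha] at hs ⊢
    by_cases hrest : ∑ i ∈ s, f i = 0
    · rw [hrest, add_zero]
      exact hb a (Finset.mem_insert_self _ _)
    · have h1 := hmin (f a) _ (h0 a (Finset.mem_insert_self _ _)) hrest hs
      have h2 := ih f b (fun i hi => h0 i (Finset.mem_insert_of_mem hi))
        (fun i hi => hb i (Finset.mem_insert_of_mem hi)) hrest
      have h3 := hb a (Finset.mem_insert_self a s)
      omega

private lemma aux_sum_distinct
    (hne : ∀ p q : A, p ≠ 0 → q ≠ 0 → v p ≠ v q →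
      p + q ≠ 0 ∧ v (p + q) = min (v p) (v q))
    {ι : Type*} [DecidableEq ι] (s : Finset ι) :
    ∀ f : ι → A, (∀ i ∈ s, f i ≠ 0) →
      (∀ i ∈ s, ∀ j ∈ s, i ≠ j → v (f i) ≠ v (f j)) → s.Nonempty →
      (∑ i ∈ s, f i) ≠ 0 ∧ ∃ i ∈ s, v (∑ i ∈ s, f i) = v (f i) := by
  induction s using Finset.induction_on with
  | empty => intro f _ _ h; simp at h
  | @insert a s ha ih =>
    intro f h0 hd _
    rw [Finset.sum_insert ha]
    by_cases hs : s.Nonempty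
    · obtain ⟨hrest, i, hi, hvi⟩ := ih f (fun j hj => h0 j (Finset.mem_insert_of_mem hj))
        (fun j hj j' hj' => hd j (Finset.mem_insert_of_mem hj) j' (Finset.mem_insert_of_mem hj')) hs
      have hfa : f a ≠ 0 := h0 a (Finset.mem_insert_self _ _)
      have hai : a ≠ i := fun h => ha (h ▸ hi)
      have hdiff : v (f a) ≠ v (∑ j ∈ s, f j) := by
        rw [hvi]
        exact hd a (Finset.mem_insert_self _ _) i (Finset.mem_insert_of_mem hi) hai
      obtain ⟨hnz, hval⟩ := hne (f a) _ hfa hrest hdiff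
      refine ⟨hnz, ?_⟩
      rcases le_total (v (f a)) (v (∑ j ∈ s, f j)) with h | h
      · exact ⟨a, Finset.mem_insert_self _ _, by rw [hval, min_eq_left h]⟩
      · exact ⟨i, Finset.mem_insert_of_mem hi, by rw [hval, min_eq_right h, hvi]⟩
    · have hse : s = ∅ := Finset.not_nonempty_iff_eq_empty.mp hs
      subst hse
      simp only [Finset.sum_empty, add_zero]
      exact ⟨h0 a (Finset.mem_insert_self _ _), a, Finset.mem_insert_self _ _, rfl⟩

private lemma aux_li (hmul : ∀ p q : A, p ≠ 0 → q ≠ 0 → v (p * q) = v p + v q)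
    (hne : ∀ p q : A, p ≠ 0 → q ≠ 0 → v p ≠ v q →
      p + q ≠ 0 ∧ v (p + q) = min (v p) (v q))
    {ι : Type*} (g : ι → A) (hg : ∀ i, g i ≠ 0)
    (hd : ∀ i j, i ≠ j → v (g i) ≠ v (g j)) : LinearIndependent k g := by
  classical
  rw [linearIndependent_iff']
  intro s c hsum i hi
  by_contra hci
  set s' := s.filter (fun j => c j ≠ 0) with hs'
  have hne' : s'.Nonempty := ⟨i, Finset.mem_filter.mpr ⟨hi, hci⟩⟩
  have hsum' : ∑ j ∈ s', c j • g j = 0 := by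
    have heq : ∑ j ∈ s', c j • g j = ∑ j ∈ s, c j • g j :=
      Finset.sum_filter_of_ne (fun x _ hx h0 => hx (by rw [h0, zero_smul]))
    rw [heq, hsum]
  have h0 : ∀ j ∈ s', c j • g j ≠ 0 := fun j hj =>
    (aux_v_smul hmul (Finset.mem_filter.mp hj).2 (hg j)).1
  have hd' : ∀ j ∈ s', ∀ j' ∈ s', j ≠ j' → v (c j • g j) ≠ v (c j' • g j') := by
    intro j hj j' hj' hjj'
    rw [(aux_v_smul hmul (Finset.mem_filter.mp hj).2 (hg j)).2,
      (aux_v_smul hmul (Finset.mem_filter.mp hj').2 (hg j')).2]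
    exact hd j j' hjj'
  exact (aux_sum_distinct hne s' _ h0 hd' hne').1 hsum'

private lemma aux_span [DecidableEq A]
    (hcomb : ∀ p q : A, p ≠ 0 → q ≠ 0 → v p = v q →
      ∃ c : k, c ≠ 0 ∧ (p + c • q = 0 ∨ v p < v (p + c • q)))
    (U : Submodule k A) (S : Finset ℕ)
    (hS : ∀ p ∈ U, p ≠ 0 → v p ∈ S)
    (pt : ℕ → A) (hpt : ∀ t ∈ S, pt t ∈ U ∧ pt t ≠ 0 ∧ v (pt t) = t) :
    U ≤ Submodule.span k (↑(S.image pt) : Set A) := by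
  classical
  set N := (S.sup id) + 1 with hN
  have key : ∀ d : ℕ, ∀ p ∈ U, p ≠ 0 → N ≤ v p + d →
      p ∈ Submodule.span k (↑(S.image pt) : Set A) := by
    intro d
    induction d with
    | zero =>
      intro p hp hp0 hle
      exfalso
      have h1 : v p ∈ S := hS p hp hp0
      have h2 : v p ≤ S.sup id := Finset.le_sup (f := id) h1
      omega
    | succ d ih =>
      intro p hp hp0 hle
      have htS : v p ∈ S := hS p hp hp0
      obtain ⟨hptU, hpt0, hptv⟩ := hpt _ htS
      obtain ⟨c, hc, hcase⟩ := hcomb p (pt (v p)) hp0 hpt0 hptv.symm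
      have hmem : pt (v p) ∈ Submodule.span k (↑(S.image pt) : Set A) :=
        Submodule.subset_span (Finset.mem_coe.mpr (Finset.mem_image.mpr ⟨v p, htS, rfl⟩))
      by_cases hz : p + c • pt (v p) = 0
      · have hpe : p = (-c) • pt (v p) := by
          rw [neg_smul]
          exact add_eq_zero_iff_eq_neg.mp hz
        rw [hpe]
        exact Submodule.smul_mem _ _ hmem
      · have hlt : v p < v (p + c • pt (v p)) := hcase.resolve_left hz
        have hmemU : p + c • pt (v p) ∈ U := U.add_mem hp (U.smul_mem _ hptU)
        have hsp := ih (p + c • pt (v p)) hmemU hz (by omega)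
        have hpe : p = (p + c • pt (v p)) - c • pt (v p) := by abel
        rw [hpe]
        exact Submodule.sub_mem _ hsp (Submodule.smul_mem _ _ hmem)
  intro p hp
  by_cases hp0 : p = 0
  · rw [hp0]; exact Submodule.zero_mem _
  · exact key N p hp hp0 (by omega)

end Aux

/-- Let `A` carry a discrete valuation `v` over `k`, let `V ⊆ A` have
dimension `n+1` with order tuple `m_ξ(V) = (m_0, …, m_n)`, and let
`q_0, …, q_n` be linearly independent with `v(q_i) ≥ m_i` for all `i` and
strict inequality for some `i`.  Then the order tuple of `W = span(q_i)`
satisfies `m_ξ(W) > m_ξ(V)` componentwise. -/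
theorem stmt14 (k : Type*) [Field k] (A : Type*) [CommRing A] [IsDomain A]
    [Algebra k A]
    (v : A → ℕ)
    (hmul : ∀ p q : A, p ≠ 0 → q ≠ 0 → v (p * q) = v p + v q)
    (hmin : ∀ p q : A, p ≠ 0 → q ≠ 0 → p + q ≠ 0 → min (v p) (v q) ≤ v (p + q))
    (hne : ∀ p q : A, p ≠ 0 → q ≠ 0 → v p ≠ v q →
      p + q ≠ 0 ∧ v (p + q) = min (v p) (v q))
    (hcomb : ∀ p q : A, p ≠ 0 → q ≠ 0 → v p = v q →
      ∃ c : k, c ≠ 0 ∧ (p + c • q = 0 ∨ v p < v (p + c • q)))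
    (n : ℕ) (V : Submodule k A) (hV : Module.finrank k V = n + 1)
    -- the order tuple of `V`
    (m : Fin (n + 1) → ℕ)
    (hmdec : ∀ i j : Fin (n + 1), i < j → m j < m i)
    (hmval : ∀ i : Fin (n + 1), ∃ p ∈ V, p ≠ 0 ∧ v p = m i)
    (hmall : ∀ p ∈ V, p ≠ 0 → ∃ i : Fin (n + 1), v p = m i)
    -- linearly independent elements with larger orders
    (q : Fin (n + 1) → A) (hq0 : ∀ i, q i ≠ 0)
    (hli : LinearIndependent k q)
    (hge : ∀ i, m i ≤ v (q i)) (hstrict : ∃ i, m i < v (q i)) :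
    ∃ m' : Fin (n + 1) → ℕ,
      (∀ i j : Fin (n + 1), i < j → m' j < m' i) ∧
      (∀ i : Fin (n + 1),
        ∃ p ∈ Submodule.span k (Set.range q), p ≠ 0 ∧ v p = m' i) ∧
      (∀ p ∈ Submodule.span k (Set.range q), p ≠ 0 →
        ∃ i : Fin (n + 1), v p = m' i) ∧
      (∀ i, m i ≤ m' i) ∧ m' ≠ m := by
  classical
  set W := Submodule.span k (Set.range q) with hW
  haveI hWfin : FiniteDimensional k W :=
    FiniteDimensional.span_of_finite k (Set.finite_range q)
  have hWrank : Module.finrank k W = n + 1 := by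
    rw [hW, finrank_span_eq_card hli, Fintype.card_fin]
  set S : Set ℕ := {t | ∃ p ∈ W, p ≠ 0 ∧ v p = t} with hSdef
  -- upper bound on any finite set of realized values
  have hupper : ∀ t : Finset ℕ, (↑t : Set ℕ) ⊆ S → t.card ≤ n + 1 := by
    intro t ht
    have hmem : ∀ x : t, ∃ p, p ∈ W ∧ p ≠ 0 ∧ v p = (x : ℕ) := by
      intro x
      obtain ⟨p, hp, hp0, hpv⟩ := ht (Finset.mem_coe.mpr x.2)
      exact ⟨p, hp, hp0, hpv⟩
    choose p hpW hp0 hpv using hmem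
    have hdist : ∀ x y : t, x ≠ y → v (p x) ≠ v (p y) := by
      intro x y hxy
      rw [hpv x, hpv y]
      exact fun h => hxy (Subtype.ext h)
    have hliP : LinearIndependent k p := aux_li hmul hne p hp0 hdist
    have hliP' : LinearIndependent k (fun x : t => (⟨p x, hpW x⟩ : W)) :=
      LinearIndependent.of_comp W.subtype hliP
    calc t.card = Fintype.card t := (Fintype.card_coe t).symm
      _ ≤ Module.finrank k W := hliP'.fintype_card_le_finrank
      _ = n + 1 := hWrank
  have hSfin : S.Finite := by
    by_contra hinf
    obtain ⟨t, hts, htc⟩ :=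
      Set.Infinite.exists_subset_card_eq hinf (n + 2)
    have := hupper t hts
    omega
  set Sfin := hSfin.toFinset with hSfin'
  have hmemS : ∀ t, t ∈ Sfin ↔ ∃ p ∈ W, p ≠ 0 ∧ v p = t := by
    intro t
    rw [hSfin', Set.Finite.mem_toFinset]
    exact Iff.rfl
  -- the counting lemma
  have hcount : ∀ (i : Fin (n + 1)) (b : ℕ), (∀ j : Fin (n + 1), j ≤ i → b ≤ v (q j)) →
      (i : ℕ) + 1 ≤ (Sfin.filter (fun t => b ≤ t)).card := by
    intro i b hb
    set q' : Fin ((i : ℕ) + 1) → A := q ∘ Fin.castLE (by omega) with hq'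
    set U := Submodule.span k (Set.range q') with hU
    have hUW : U ≤ W := by
      apply Submodule.span_mono
      rintro _ ⟨j, rfl⟩
      exact ⟨_, rfl⟩
    have hliq' : LinearIndependent k q' := hli.comp _ (Fin.castLE_injective _)
    have hUrank : Module.finrank k U = (i : ℕ) + 1 := by
      rw [hU, finrank_span_eq_card hliq', Fintype.card_fin]
    have hval : ∀ p ∈ U, p ≠ 0 → v p ∈ Sfin ∧ b ≤ v p := by
      intro p hp hp0
      refine ⟨(hmemS _).mpr ⟨p, hUW hp, hp0, rfl⟩, ?_⟩
      obtain ⟨c, hc⟩ := (mem_span_range_iff_exists_fun k).mp (hU ▸ hp)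
      set s' := Finset.univ.filter (fun j => c j ≠ 0) with hs'
      have hsum : ∑ j ∈ s', c j • q' j = p := by
        have heq : ∑ j ∈ s', c j • q' j = ∑ j, c j • q' j :=
          Finset.sum_filter_of_ne (fun x _ hx h0 => hx (by rw [h0, zero_smul]))
        rw [heq, hc]
      rw [← hsum]
      apply aux_sum_min hmin s' _ b
      · intro j hj
        exact (aux_v_smul hmul (Finset.mem_filter.mp hj).2
          (show q' j ≠ 0 from hq0 _)).1
      · intro j hj
        have h2 := (aux_v_smul hmul (Finset.mem_filter.mp hj).2
          (show q' j ≠ 0 from hq0 _)).2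
        rw [h2]
        have h3 : (Fin.castLE (by omega : (i : ℕ) + 1 ≤ n + 1) j) ≤ i := by
          rw [Fin.le_def]
          simp only [Fin.coe_castLE]
          omega
        exact hb _ h3
      · rw [hsum]; exact hp0
    set T := Sfin.filter (fun t => ∃ p ∈ U, p ≠ 0 ∧ v p = t) with hT
    have hTS : ∀ p ∈ U, p ≠ 0 → v p ∈ T := fun p hp hp0 =>
      Finset.mem_filter.mpr ⟨(hval p hp hp0).1, p, hp, hp0, rfl⟩
    have hreal : ∀ t ∈ T, ∃ p, p ∈ U ∧ p ≠ 0 ∧ v p = t := by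
      intro t ht
      obtain ⟨-, p, hp, hp0, hpv⟩ := Finset.mem_filter.mp ht
      exact ⟨p, hp, hp0, hpv⟩
    choose! pt hpt using hreal
    have hspan := aux_span hcomb U T hTS pt hpt
    haveI : FiniteDimensional k (Submodule.span k (↑(T.image pt) : Set A)) :=
      FiniteDimensional.span_of_finite k (T.image pt).finite_toSet
    have hfr : Module.finrank k U ≤ (T.image pt).card :=
      le_trans (Submodule.finrank_mono hspan) (finrank_span_finset_le_card _)
    have hsub : T ⊆ Sfin.filter (fun t => b ≤ t) := by
      intro t ht
      obtain ⟨htS, p, hp, hp0, hpv⟩ := Finset.mem_filter.mp ht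
      exact Finset.mem_filter.mpr ⟨htS, hpv ▸ (hval p hp hp0).2⟩
    calc (i : ℕ) + 1 = Module.finrank k U := hUrank.symm
      _ ≤ (T.image pt).card := hfr
      _ ≤ T.card := Finset.card_image_le
      _ ≤ _ := Finset.card_le_card hsub
  -- exact cardinality
  have hSn : Sfin.card = n + 1 := by
    have h1 := hcount (Fin.last n) 0 (fun j _ => Nat.zero_le _)
    rw [Finset.filter_true_of_mem (fun _ _ => Nat.zero_le _)] at h1
    have h3 : Sfin.card ≤ n + 1 := by
      apply hupper
      rw [hSfin', Set.Finite.coe_toFinset]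
    simp only [Fin.val_last] at h1
    omega
  set e := Sfin.orderIsoOfFin hSn with he
  set m' : Fin (n + 1) → ℕ := fun i => (e i.rev : ℕ) with hm'
  have hm'dec : ∀ i j : Fin (n + 1), i < j → m' j < m' i := by
    intro i j hij
    have h1 : j.rev < i.rev := Fin.rev_lt_rev.mpr hij
    exact_mod_cast e.strictMono h1
  have hindex : ∀ (b : ℕ) (i : Fin (n + 1)),
      (i : ℕ) + 1 ≤ (Sfin.filter (fun t => b ≤ t)).card → b ≤ m' i := by
    intro b i hcard
    by_contra hlt
    push_neg at hlt
    have hsub : Sfin.filter (fun t => b ≤ t) ⊆ (Finset.Iio i).image m' := by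
      intro t ht
      obtain ⟨htS, hbt⟩ := Finset.mem_filter.mp ht
      set j := (e.symm ⟨t, htS⟩).rev with hj
      have hmj : m' j = t := by
        rw [hm']
        simp only [hj, Fin.rev_rev]
        rw [OrderIso.apply_symm_apply]
      have hji : j < i := by
        by_contra hge'
        push_neg at hge'
        have hle2 : m' j ≤ m' i := by
          rcases eq_or_lt_of_le hge' with h | h
          · rw [h]
          · exact le_of_lt (hm'dec i j h)
        omega
      exact Finset.mem_image.mpr ⟨j, Finset.mem_Iio.mpr hji, hmj⟩
    have h1 := Finset.card_le_card hsub
    have h2 : ((Finset.Iio i).image m').card ≤ (Finset.Iio i).card := Finset.card_image_le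
    have h3 : (Finset.Iio i : Finset (Fin (n + 1))).card = (i : ℕ) := by simp
    omega
  refine ⟨m', hm'dec, ?_, ?_, ?_, ?_⟩
  · intro i
    obtain ⟨p, hp, hp0, hpv⟩ := (hmemS _).mp (e i.rev).2
    exact ⟨p, hp, hp0, hpv⟩
  · intro p hp hp0
    have ht : v p ∈ Sfin := (hmemS _).mpr ⟨p, hp, hp0, rfl⟩
    refine ⟨(e.symm ⟨v p, ht⟩).rev, ?_⟩
    rw [hm']
    simp only [Fin.rev_rev]
    rw [OrderIso.apply_symm_apply]
  · intro i
    apply hindex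
    apply hcount
    intro j hj
    rcases eq_or_lt_of_le hj with h | h
    · rw [h]; exact hge i
    · exact le_trans (le_of_lt (hmdec j i h)) (hge j)
  · obtain ⟨i0, hi0⟩ := hstrict
    have hkey : m i0 + 1 ≤ m' i0 := by
      apply hindex
      apply hcount
      intro j hj
      rcases eq_or_lt_of_le hj with h | h
      · rw [h]; omega
      · have := hmdec j i0 h
        have := hge j
        omega
    intro heq
    rw [heq] at hkey
    omega
end

section
/- Let C be a non-singular integral affine curve over a field k of characteristic 0 with A = k[C], with Ω_{A/k} free on dt. Let V ⊆ A be a subspace with basis p_0,...,p_n, let η_1,...,η_r ∈ C(k) be pairwise distinct points, and b_1,...,b_r ≥ 1 integers with Σb_i = n. Form the (n+1)×(n+1) matrix Z over A whose first row is (p_0,...,p_n) and whose remaining rows are the evaluations (p_0^{(s)}(η_i),...,p_n^{(s)}(η_i)) for 1 ≤ i ≤ r and 0 ≤ s ≤ b_i − 1. Then det Z ≠ 0 if and only if the subspace V_0 = {f ∈ V : ord_{η_i}(f) ≥ b_i for all i} has dimension one; and in that case det Z is a nonzero element of V_0. -/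
/-!
Write `L_x = η_i ∘ d^s` for the row index `x = (i, s)` and let `N` be the scalar matrix with rows
`(L_x(p_j))_j` below an arbitrary first row. Expanding `det Z` along its first row gives
`det Z = ∑ c_v • p_v`, where `c` is the column of the adjugate of `N` belonging to the first row.
Then `L_x(det Z)` is the same expansion for `N` with its first row replaced by its row `x`, a matrix
with a repeated row, so `det Z ∈ V_0`. As the `p_v` are independent, `det Z ≠ 0` iff `c ≠ 0`, iff
some first row makes `N` invertible, iff the `n` rows `(L_x(p_j))_j` are independent, i.e. the
evaluation matrix has rank `n`. Finally `V_0` is the image of the kernel of that matrix under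
`c ↦ ∑ c_v p_v`, so rank–nullity gives `dim V_0 = n + 1 - rank`.
-/

universe u

open Matrix Module Submodule Set

section LinearIndependent

variable {K M σ : Type*} [Field K] [AddCommGroup M] [Module K M]

theorem linearIndependent_sumElim_unit_iff {v : σ → M} {w : M} :
    LinearIndependent K (Sum.elim (fun _ : Unit => w) v) ↔
      LinearIndependent K v ∧ w ∉ span K (range v) := by
  rw [linearIndependent_sum, linearIndependent_unique_iff]
  simp only [Function.comp_def, Sum.elim_inl, Sum.elim_inr, range_const]
  rw [disjoint_comm, disjoint_span_singleton]
  constructor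
  · rintro ⟨hw, hv, h⟩
    exact ⟨hv, fun hmem => hw (h hmem)⟩
  · rintro ⟨hv, hw⟩
    refine ⟨?_, hv, fun hmem => (hw hmem).elim⟩
    rintro rfl
    exact hw (zero_mem _)

theorem exists_linearIndependent_sumElim_unit_iff [FiniteDimensional K M] [Fintype σ]
    {v : σ → M} (hcard : Fintype.card σ < finrank K M) :
    (∃ w, LinearIndependent K (Sum.elim (fun _ : Unit => w) v)) ↔ LinearIndependent K v := by
  simp only [linearIndependent_sumElim_unit_iff, exists_and_left, and_iff_left_iff_imp]
  intro _
  by_contra! h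
  exact hcard.not_ge (finrank_le_of_span_eq_top (eq_top_iff'.mpr h))

end LinearIndependent

namespace Matrix

variable {σ ι α β : Type*}

theorem det_updateRow_eq_sum_mul_adjugate [Fintype ι] [DecidableEq ι] [CommRing α]
    (M : Matrix ι ι α) (j : ι) (w : ι → α) :
    (M.updateRow j w).det = ∑ v, w v * M.adjugate v j := by
  rw [det_eq_sum_mul_adjugate_row _ j]
  refine Finset.sum_congr rfl fun v _ => ?_
  rw [updateRow_self, adjugate_apply, adjugate_apply, updateRow_idem]

variable (e : Unit ⊕ σ ≃ ι)

def insertRow (w : ι → α) (W : Matrix σ ι α) : Matrix ι ι α :=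
  of fun u j => Sum.elim (fun _ => w) W (e.symm u) j

@[simp]
theorem insertRow_apply_inl (w : ι → α) (W : Matrix σ ι α) :
    insertRow e w W (e (.inl ())) = w := by
  ext j; simp only [insertRow, of_apply, Equiv.symm_apply_apply]; rfl

@[simp]
theorem insertRow_apply_inr (w : ι → α) (W : Matrix σ ι α) (x : σ) :
    insertRow e w W (e (.inr x)) = W x := by
  ext j; simp only [insertRow, of_apply, Equiv.symm_apply_apply]; rfl

theorem insertRow_map (f : α → β) (w : ι → α) (W : Matrix σ ι α) :
    (insertRow e w W).map f = insertRow e (f ∘ w) (W.map f) := by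
  ext u j
  obtain ⟨⟨⟨⟩⟩ | x, rfl⟩ := e.surjective u <;> simp

theorem row_insertRow_comp (w : ι → α) (W : Matrix σ ι α) :
    (insertRow e w W).row ∘ e = Sum.elim (fun _ => w) W.row := by
  funext y
  rcases y with ⟨⟨⟩⟩ | x
  exacts [insertRow_apply_inl e w W, insertRow_apply_inr e w W x]

section

variable [DecidableEq ι]

theorem insertRow_eq_updateRow (w w' : ι → α) (W : Matrix σ ι α) :
    insertRow e w W = (insertRow e w' W).updateRow (e (.inl ())) w := by
  ext u j
  obtain ⟨⟨⟨⟩⟩ | x, rfl⟩ := e.surjective u <;> simp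

variable [Fintype ι]

theorem det_insertRow [CommRing α] (w : ι → α) (W : Matrix σ ι α) :
    (insertRow e w W).det = ∑ v, w v * (insertRow e 0 W).adjugate v (e (.inl ())) := by
  rw [insertRow_eq_updateRow e w 0, det_updateRow_eq_sum_mul_adjugate]

theorem sum_mul_adjugate_insertRow [CommRing α] (w : ι → α) (W : Matrix σ ι α) (x : σ) :
    ∑ v, W x v * (insertRow e w W).adjugate v (e (.inl ())) = 0 := by
  simpa [mul_apply] using congr_fun₂ (mul_adjugate (insertRow e w W)) (e (.inr x)) (e (.inl ()))

theorem exists_det_insertRow_ne_zero_iff {K : Type*} [Field K] [Fintype σ] (W : Matrix σ ι K) :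
    (∃ w, (insertRow e w W).det ≠ 0) ↔ LinearIndependent K W.row := by
  have hcard : Fintype.card σ < finrank K (ι → K) := by
    simp [Fintype.card_congr e.symm]
  simp_rw [← isUnit_iff_ne_zero, ← isUnit_iff_isUnit_det, ← linearIndependent_rows_iff_isUnit,
    ← linearIndependent_equiv e, row_insertRow_comp]
  exact exists_linearIndependent_sumElim_unit_iff hcard

end

end Matrix

section Evaluation

variable {k M σ ι : Type*} [Field k] [AddCommGroup M] [Module k M] [Fintype ι]
  (L : σ → M →ₗ[k] k) (q : ι → M)

def evalMatrix : Matrix σ ι k := of fun x j => L x (q j)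

theorem apply_linearCombination_eq_mulVec (c : ι → k) (x : σ) :
    L x (Fintype.linearCombination k q c) = (evalMatrix L q *ᵥ c) x := by
  simp [Fintype.linearCombination_apply, mulVec, dotProduct, evalMatrix, mul_comm]

theorem span_inf_iInf_ker_eq_map :
    span k (range q) ⊓ ⨅ x, LinearMap.ker (L x) =
      (LinearMap.ker (evalMatrix L q).mulVecLin).map (Fintype.linearCombination k q) := by
  ext f
  simp only [mem_inf, mem_iInf, LinearMap.mem_ker, mem_map, ← Fintype.range_linearCombination,
    LinearMap.mem_range, mulVecLin_apply]
  constructor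
  · rintro ⟨⟨c, rfl⟩, h⟩
    exact ⟨c, funext fun x => (apply_linearCombination_eq_mulVec L q c x).symm.trans (h x), rfl⟩
  · rintro ⟨c, hc, rfl⟩
    exact ⟨⟨c, rfl⟩, fun x => (apply_linearCombination_eq_mulVec L q c x).trans (congrFun hc x)⟩

theorem finrank_span_inf_iInf_ker_add_rank (hq : LinearIndependent k q) :
    finrank k ↥(span k (range q) ⊓ ⨅ x, LinearMap.ker (L x)) + (evalMatrix L q).rank =
      Fintype.card ι := by
  rw [span_inf_iInf_ker_eq_map, ← (equivMapOfInjective _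
    hq.fintypeLinearCombination_injective _).finrank_eq, add_comm, Matrix.rank,
    LinearMap.finrank_range_add_finrank_ker, finrank_fintype_fun_eq_card]

end Evaluation

section Determinant

variable {k A σ ι : Type*} [Field k] [CommRing A] [Algebra k A] [Fintype ι] [DecidableEq ι]
  (e : Unit ⊕ σ ≃ ι) (L : σ → A →ₗ[k] k) (q : ι → A)

theorem det_insertRow_evalMatrix :
    (insertRow e q ((evalMatrix L q).map (algebraMap k A))).det =
      ∑ v, (insertRow e 0 (evalMatrix L q)).adjugate v (e (.inl ())) • q v := by
  have hmap : insertRow e 0 ((evalMatrix L q).map (algebraMap k A)) =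
      (algebraMap k A).mapMatrix (insertRow e 0 (evalMatrix L q)) := by
    rw [RingHom.mapMatrix_apply, insertRow_map]
    congr
    ext; simp
  simp_rw [det_insertRow, hmap, ← RingHom.map_adjugate, RingHom.mapMatrix_apply, map_apply,
    Algebra.smul_def, mul_comm]

theorem det_insertRow_evalMatrix_mem :
    (insertRow e q ((evalMatrix L q).map (algebraMap k A))).det ∈
      span k (range q) ⊓ ⨅ x, LinearMap.ker (L x) := by
  rw [det_insertRow_evalMatrix]
  refine mem_inf.mpr ⟨sum_mem fun v _ => smul_mem _ _ (subset_span ⟨v, rfl⟩),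
    mem_iInf _ |>.mpr fun x => ?_⟩
  rw [LinearMap.mem_ker, map_sum, ← sum_mul_adjugate_insertRow e 0 (evalMatrix L q) x]
  simp [evalMatrix, mul_comm]

theorem det_insertRow_evalMatrix_ne_zero_iff [Fintype σ] (hq : LinearIndependent k q) :
    (insertRow e q ((evalMatrix L q).map (algebraMap k A))).det ≠ 0 ↔
      finrank k ↥(span k (range q) ⊓ ⨅ x, LinearMap.ker (L x)) = 1 := by
  let c : ι → k := fun v => (insertRow e 0 (evalMatrix L q)).adjugate v (e (.inl ()))
  have hdet : (insertRow e q ((evalMatrix L q).map (algebraMap k A))).det ≠ 0 ↔ c ≠ 0 := by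
    rw [det_insertRow_evalMatrix, ← Fintype.linearCombination_apply]
    exact map_ne_zero_iff _ hq.fintypeLinearCombination_injective
  have hc : c ≠ 0 ↔ ∃ w, (insertRow e w (evalMatrix L q)).det ≠ 0 := by
    have hexp w : (insertRow e w (evalMatrix L q)).det = ∑ v, w v * c v := det_insertRow e w _
    constructor
    · intro hc0
      obtain ⟨v, hv⟩ := Function.ne_iff.mp hc0
      exact ⟨Pi.single v 1, by simpa [hexp, Pi.single_apply] using hv⟩
    · rintro ⟨w, hw⟩ hc0
      simp [hexp, hc0] at hw
  have hrank : LinearIndependent k (evalMatrix L q).row ↔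
      (evalMatrix L q).rank = Fintype.card σ := by
    rw [rank_eq_finrank_span_row, linearIndependent_iff_card_eq_finrank_span, eq_comm]
    rfl
  have hcard := finrank_span_inf_iInf_ker_add_rank L q hq
  rw [hdet, hc, exists_det_insertRow_ne_zero_iff, hrank]
  simp only [← Fintype.card_congr e, Fintype.card_sum, Fintype.card_unique] at hcard
  omega

end Determinant

theorem stmt16_general (k : Type u) [Field k]
    (A : Type u) [CommRing A] [Algebra k A]
    (d : Module.End k A)
    (n : ℕ) (V : Submodule k A) (p : Fin (n + 1) → A)
    (hli : LinearIndependent k p)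
    (hspan : Submodule.span k (Set.range p) = V)
    (r : ℕ) (η : Fin r → (A →ₐ[k] k))
    (b : Fin r → ℕ)
    (e : (Unit ⊕ (Σ i : Fin r, Fin (b i))) ≃ Fin (n + 1)) :
    let R : (Unit ⊕ (Σ i : Fin r, Fin (b i))) → Fin (n + 1) → A :=
      Sum.elim (fun _ => fun j => p j)
        (fun is => fun j => algebraMap k A (η is.1 ((d ^ (is.2 : ℕ)) (p j))))
    let Z : Matrix (Fin (n + 1)) (Fin (n + 1)) A :=
      Matrix.of fun u j => R (e.symm u) j
    let V0 : Submodule k A :=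
      V ⊓ ⨅ (i : Fin r) (s : Fin (b i)),
        LinearMap.ker ((η i).toLinearMap ∘ₗ (d ^ (s : ℕ) : Module.End k A))
    (Z.det ≠ 0 ↔ Module.finrank k V0 = 1) ∧
      (Z.det ≠ 0 → Z.det ∈ V0) := by
  intro R Z V0
  let L (x : Σ i : Fin r, Fin (b i)) : A →ₗ[k] k := (η x.1).toLinearMap ∘ₗ d ^ (x.2 : ℕ)
  have hZ : Z = insertRow e p ((evalMatrix L p).map (algebraMap k A)) := rfl
  have hV0 : V0 = span k (range p) ⊓ ⨅ x, LinearMap.ker (L x) := by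
    rw [hspan, iInf_sigma]
  rw [hZ, hV0]
  exact ⟨det_insertRow_evalMatrix_ne_zero_iff e L p hli, fun _ => det_insertRow_evalMatrix_mem e L p⟩

/-- Let `A = k[C]` for a non-singular integral affine curve over `k` (char 0)
with `Ω_{A/k}` free on `dt`, let `V ⊆ A` have basis `p_0, …, p_n`, let
`η_1, …, η_r ∈ C(k)` be pairwise distinct and `b_1, …, b_r ≥ 1` with
`Σ b_i = n`.  Let `Z` be the `(n+1)×(n+1)` matrix whose first row is
`(p_0, …, p_n)` and whose remaining rows are the evaluations
`(p_0^{(s)}(η_i), …, p_n^{(s)}(η_i))` for `0 ≤ s < b_i`.  Then `det Z ≠ 0`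
iff `V_0 = {f ∈ V : ord_{η_i}(f) ≥ b_i ∀i}` has dimension one, in which case
`det Z` is a nonzero element of `V_0`. -/
theorem stmt16 (k : Type u) [Field k] [CharZero k]
    (A : Type u) [CommRing A] [IsDomain A] [Algebra k A]
    [Algebra.FiniteType k A] [Algebra.Smooth k A]
    (hdim : ringKrullDim A = 1)
    (t : A)
    (hfree : ∀ ω : Ω[A⁄k], ∃! c : A, ω = c • KaehlerDifferential.D k A t)
    (d : Module.End k A)
    (hd : ∀ f : A, KaehlerDifferential.D k A f =
      d f • KaehlerDifferential.D k A t)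
    (n : ℕ) (V : Submodule k A) (p : Fin (n + 1) → A)
    (hp : ∀ j, p j ∈ V) (hli : LinearIndependent k p)
    (hspan : Submodule.span k (Set.range p) = V)
    (r : ℕ) (η : Fin r → (A →ₐ[k] k)) (hη : Function.Injective η)
    (b : Fin r → ℕ) (hb : ∀ i, 1 ≤ b i) (hsum : ∑ i, b i = n)
    (e : (Unit ⊕ (Σ i : Fin r, Fin (b i))) ≃ Fin (n + 1)) :
    let R : (Unit ⊕ (Σ i : Fin r, Fin (b i))) → Fin (n + 1) → A :=
      Sum.elim (fun _ => fun j => p j)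
        (fun is => fun j => algebraMap k A (η is.1 ((d ^ (is.2 : ℕ)) (p j))))
    let Z : Matrix (Fin (n + 1)) (Fin (n + 1)) A :=
      Matrix.of fun u j => R (e.symm u) j
    let V0 : Submodule k A :=
      V ⊓ ⨅ (i : Fin r) (s : Fin (b i)),
        LinearMap.ker ((η i).toLinearMap ∘ₗ (d ^ (s : ℕ) : Module.End k A))
    (Z.det ≠ 0 ↔ Module.finrank k V0 = 1) ∧
      (Z.det ≠ 0 → Z.det ∈ V0) :=
  stmt16_general k A d n V p hli hspan r η b e
end

section
/- Let S ⊆ ℝⁿ be a set, K its closed convex hull, V = ℝ[x]_{≤1} the space of affine-linear polynomials, and P_S = {f ∈ V : f ≥ 0 on S}. If f ∈ P_S spans an extreme ray of the closed pointed cone P_S restricted to functions on the Zariski closure curve, then f is determined up to positive scaling within V by its zeros on S counted with multiplicities; in particular (for S a compact one-dimensional semialgebraic subset of a non-singular affine curve C with V ⊆ ℝ[C] of dimension n+1) any f spanning an extreme ray of P_{V,S} has at least n zeros in S counted with multiplicities. -/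
/-! `D t` is a basis of `Ω[A⁄ℝ]`, so `d = d/dt` is a derivation and, at a point `η` with maximal
ideal `𝔪 = ker η`, the local coordinate `τ = t - η t` spans `𝔪/𝔪²` (the derivation `a ↦ a - η a`
into `A/𝔪²` factors through `Ω[A⁄ℝ]`). Hence `𝔪ᵏ/𝔪ᵏ⁺¹` is spanned by `τᵏ`, the coefficient is
`η (dᵏ h) / k!`, and `ordGe d h η m ↔ h ∈ 𝔪ᵐ`.

If `g ∈ V` vanishes at every point of `S` at least to the order of `f`, then `g ∈ (f) + 𝔪ᴺ` for
all `N`, so Krull's intersection theorem gives `u g = p f` with `η u ≠ 0`. Compactness of `S`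
turns these local divisions into `|g| ≤ C f` on `S`; then `f ± C⁻¹ g` lie in `P`, and extremality
forces `g ∈ ℝ f`. This is `V_f = ℝ f`, which gives the first claim. For the count: if `f` has
finitely many zeros on `S`, the `∑ ord_ξ f` linear conditions `ξ (dˢ g) = 0` cut `V` down to
`ℝ f`, so `n + 1 ≤ ∑ ord_ξ f + 1`; if it has infinitely many, `n` simple zeros suffice. -/

/-- `ordGe d f η m` expresses `ord_η(f) ≥ m`: the first `m` iterated
`d/dt`-derivatives of `f` vanish at the point `η`. -/
def ordGe {A : Type} [CommRing A] [Algebra ℝ A] (d : Module.End ℝ A)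
    (f : A) (η : A →ₐ[ℝ] ℝ) (m : ℕ) : Prop :=
  ∀ s < m, η ((d ^ s) f) = 0

open Module Topology

section Compactness

variable {X : Type*} [TopologicalSpace X] {K : Set X}

theorem eventually_abs_le_mul_of_mul_eq_mul {x : X} {F G U Q : X → ℝ} (hU : ContinuousAt U x)
    (hQ : ContinuousAt Q x) (hUx : U x ≠ 0) (heq : ∀ y ∈ K, U y * G y = Q y * F y)
    (hF : ∀ y ∈ K, 0 ≤ F y) :
    ∃ C > 0, ∀ᶠ y in 𝓝[K] x, |G y| ≤ C * F y := by
  have hUx' : 0 < |U x| := abs_pos.mpr hUx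
  have hU_near : ∀ᶠ y in 𝓝 x, |U x| / 2 < |U y| :=
    hU.abs.eventually (lt_mem_nhds (half_lt_self hUx'))
  have hQ_near : ∀ᶠ y in 𝓝 x, |Q y| < |Q x| + 1 :=
    hQ.abs.eventually (gt_mem_nhds (lt_add_one _))
  refine ⟨2 * (|Q x| + 1) / |U x|, by positivity, ?_⟩
  filter_upwards [nhdsWithin_le_nhds hU_near, nhdsWithin_le_nhds hQ_near, self_mem_nhdsWithin]
    with y hUy hQy hy
  have hUy' : 0 < |U y| := (half_pos hUx').trans hUy
  have hFy := hF y hy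
  have key : |U y| * |G y| = |Q y| * F y := by
    rw [← abs_mul, heq y hy, abs_mul, abs_of_nonneg hFy]
  calc |G y| = |Q y| * F y / |U y| := by rw [← key, mul_div_cancel_left₀ _ hUy'.ne']
    _ ≤ (|Q x| + 1) * F y / (|U x| / 2) := by gcongr
    _ = 2 * (|Q x| + 1) / |U x| * F y := by field_simp

theorem IsCompact.exists_pos_abs_le_mul (hK : IsCompact K) {F G : X → ℝ}
    (hloc : ∀ x ∈ K, ∃ C > 0, ∀ᶠ y in 𝓝[K] x, |G y| ≤ C * F y) :
    ∃ C > 0, ∀ y ∈ K, |G y| ≤ C * F y := by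
  refine hK.induction_on (p := fun s => ∃ C > 0, ∀ y ∈ s, |G y| ≤ C * F y)
    ⟨1, one_pos, by simp⟩ (fun s t hst ⟨C, hC, h⟩ => ⟨C, hC, fun y hy => h y (hst hy)⟩) ?_ ?_
  · rintro s t ⟨C₁, hC₁, h₁⟩ ⟨C₂, hC₂, h₂⟩
    have enlarge : ∀ {C}, 0 < C → C ≤ max C₁ C₂ → ∀ y, |G y| ≤ C * F y →
        |G y| ≤ max C₁ C₂ * F y := fun hC hle y h =>
      h.trans (mul_le_mul_of_nonneg_right hle
        (nonneg_of_mul_nonneg_right ((abs_nonneg _).trans h) hC))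
    refine ⟨max C₁ C₂, lt_max_of_lt_left hC₁, ?_⟩
    rintro y (hy | hy)
    · exact enlarge hC₁ (le_max_left _ _) y (h₁ y hy)
    · exact enlarge hC₂ (le_max_right _ _) y (h₂ y hy)
  · intro x hx
    obtain ⟨C, hC, h⟩ := hloc x hx
    exact ⟨_, h, C, hC, fun y hy => hy⟩

end Compactness

theorem Submodule.finrank_le_card_add_one {K M ι : Type*} [Field K] [AddCommGroup M] [Module K M]
    [Fintype ι] (V : Submodule K M) [FiniteDimensional K V] (L : ι → M →ₗ[K] K) (f : M)
    (h : ∀ g ∈ V, (∀ i, L i g = 0) → g ∈ K ∙ f) : finrank K V ≤ Fintype.card ι + 1 := by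
  let Φ : V →ₗ[K] ι → K := LinearMap.pi fun i => L i ∘ₗ V.subtype
  have hrange : finrank K (LinearMap.range Φ) ≤ Fintype.card ι :=
    (Submodule.finrank_le _).trans (Module.finrank_fintype_fun_eq_card K).le
  have hker : finrank K (LinearMap.ker Φ) ≤ 1 := by
    rw [← Submodule.finrank_map_subtype_eq]
    refine (Submodule.finrank_mono ?_).trans (by simpa using finrank_span_le_card ({f} : Set M))
    rintro _ ⟨v, hv, rfl⟩
    exact h v v.2 fun i => congr_fun (LinearMap.mem_ker.mp hv) i
  have := LinearMap.finrank_range_add_finrank_ker Φ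
  omega

theorem Ideal.exists_one_sub_mul_mem_of_forall_mem_sup_pow {R : Type*} [CommRing R]
    [IsNoetherianRing R] (I J : Ideal R) {g : R} (hg : ∀ N : ℕ, g ∈ J ⊔ I ^ N) :
    ∃ r ∈ I, (1 - r) * g ∈ J := by
  have hmem : Ideal.Quotient.mk J g ∈ (⨅ N : ℕ, I ^ N • ⊤ : Submodule R (R ⧸ J)) := by
    refine Submodule.mem_iInf _ |>.mpr fun N => ?_
    obtain ⟨y, hy, z, hz, rfl⟩ := Submodule.mem_sup.mp (hg N)
    have hπz : Ideal.Quotient.mk J z = z • Ideal.Quotient.mk J 1 := by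
      rw [Algebra.smul_def, Ideal.Quotient.algebraMap_eq, ← map_mul, mul_one]
    rw [map_add, Ideal.Quotient.eq_zero_iff_mem.mpr hy, zero_add, hπz]
    exact Submodule.smul_mem_smul hz Submodule.mem_top
  obtain ⟨⟨r, hr⟩, hrg⟩ := (I.mem_iInf_smul_pow_eq_bot_iff _).mp hmem
  refine ⟨r, hr, Ideal.Quotient.eq_zero_iff_mem.mp ?_⟩
  rw [sub_mul, one_mul, map_sub, sub_eq_zero, map_mul]
  exact hrg.symm

section Cone

variable {M : Type*} [AddCommGroup M] [Module ℝ M]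

def SpansExtremeRay (P : Set M) (f : M) : Prop :=
  ∀ p ∈ P, ∀ q ∈ P,
    p + q ∈ {x : M | ∃ a : ℝ, 0 ≤ a ∧ x = a • f} →
      (p ∈ {x : M | ∃ a : ℝ, 0 ≤ a ∧ x = a • f} ∧
        q ∈ {x : M | ∃ a : ℝ, 0 ≤ a ∧ x = a • f})

theorem SpansExtremeRay.exists_eq_smul {P : Set M} {f g : M} (h : SpansExtremeRay P f)
    (h₁ : f + g ∈ P) (h₂ : f - g ∈ P) : ∃ c : ℝ, g = c • f := by
  obtain ⟨⟨a, -, ha⟩, -⟩ := h _ h₁ _ h₂ ⟨2, zero_le_two, by module⟩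
  exact ⟨a - 1, by rw [sub_smul, one_smul, ← ha, add_sub_cancel_left]⟩

theorem SpansExtremeRay.neg_notMem {P : Set M} {f : M} (h : SpansExtremeRay P f) (hf : f ∈ P)
    (hf0 : f ≠ 0) : -f ∉ P := by
  intro hneg
  obtain ⟨-, a, ha, hfa⟩ := h f hf (-f) hneg ⟨0, le_rfl, by simp⟩
  have : (a + 1) • f = 0 := by rw [add_smul, one_smul, ← hfa, neg_add_cancel]
  exact hf0 ((smul_eq_zero.mp this).resolve_left (by linarith))

end Cone

section Order

variable {A : Type} [CommRing A] [Algebra ℝ A] {d : Module.End ℝ A} {f : A}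
  {η : A →ₐ[ℝ] ℝ} {m m' : ℕ}

theorem ordGe_zero : ordGe d f η 0 := fun _ hs => absurd hs (Nat.not_lt_zero _)

theorem ordGe.mono (h : ordGe d f η m) (hm : m' ≤ m) : ordGe d f η m' :=
  fun s hs => h s (hs.trans_le hm)

theorem ordGe_one_iff : ordGe d f η 1 ↔ η f = 0 := by
  simp [ordGe]

theorem ordGe.apply_eq_zero (h : ordGe d f η m) (hm : m ≠ 0) : η f = 0 :=
  ordGe_one_iff.mp (h.mono (Nat.one_le_iff_ne_zero.mpr hm))

end Order

section LocalCoordinate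

variable {A : Type} [CommRing A] [Algebra ℝ A] {t : A} {d : Module.End ℝ A} (η : A →ₐ[ℝ] ℝ)

def localCoord (t : A) : A := t - algebraMap ℝ A (η t)

theorem localCoord_mem_ker : localCoord η t ∈ RingHom.ker η := by
  simp [localCoord, RingHom.mem_ker]

noncomputable def quotKerSqDerivation : Derivation ℝ A (A ⧸ RingHom.ker η ^ 2) where
  toLinearMap := (Ideal.Quotient.mkₐ ℝ (RingHom.ker η ^ 2)).toLinearMap ∘ₗ
    (LinearMap.id - Algebra.linearMap ℝ A ∘ₗ η.toLinearMap)
  map_one_eq_zero' := by simp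
  leibniz' a b := by
    simp only [LinearMap.coe_comp, Function.comp_apply, LinearMap.sub_apply, LinearMap.id_apply,
      AlgHom.toLinearMap_apply, Ideal.Quotient.mkₐ_eq_mk, Algebra.linearMap_apply,
      Algebra.smul_def, Ideal.Quotient.algebraMap_eq, ← map_mul, ← map_add]
    rw [Ideal.Quotient.mk_eq_mk_iff_sub_mem, pow_two]
    have hprod := Ideal.mul_mem_mul (localCoord_mem_ker η (t := a)) (localCoord_mem_ker η (t := b))
    convert neg_mem hprod using 1
    simp only [localCoord, map_mul]
    ring

theorem quotKerSqDerivation_apply (a : A) :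
    quotKerSqDerivation η a = Ideal.Quotient.mk _ (a - algebraMap ℝ A (η a)) := rfl

theorem mem_ker_sq_of_apply_d_eq_zero
    (hd : ∀ g : A, KaehlerDifferential.D ℝ A g = d g • KaehlerDifferential.D ℝ A t)
    {a : A} (ha : a ∈ RingHom.ker η) (hda : η (d a) = 0) : a ∈ RingHom.ker η ^ 2 := by
  have h : quotKerSqDerivation η a = d a • quotKerSqDerivation η t := by
    rw [← Derivation.liftKaehlerDifferential_comp_D, hd, map_smul,
      Derivation.liftKaehlerDifferential_comp_D]
  rw [quotKerSqDerivation_apply, quotKerSqDerivation_apply, RingHom.mem_ker.mp ha, map_zero,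
    sub_zero, Algebra.smul_def, Ideal.Quotient.algebraMap_eq, ← map_mul] at h
  rw [← Ideal.Quotient.eq_zero_iff_mem, h, Ideal.Quotient.eq_zero_iff_mem, pow_two]
  exact Ideal.mul_mem_mul hda (localCoord_mem_ker η)

theorem eq_of_smul_D_eq (hfree : ∀ ω : Ω[A⁄ℝ], ∃! c : A, ω = c • KaehlerDifferential.D ℝ A t)
    {a b : A} (h : a • KaehlerDifferential.D ℝ A t = b • KaehlerDifferential.D ℝ A t) :
    a = b := by
  obtain ⟨c, -, hc⟩ := hfree (a • KaehlerDifferential.D ℝ A t)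
  rw [hc a rfl, hc b h]

variable (hfree : ∀ ω : Ω[A⁄ℝ], ∃! c : A, ω = c • KaehlerDifferential.D ℝ A t)
  (hd : ∀ g : A, KaehlerDifferential.D ℝ A g = d g • KaehlerDifferential.D ℝ A t)
include hfree hd

theorem d_mul (a b : A) : d (a * b) = a * d b + b * d a :=
  eq_of_smul_D_eq hfree <| by
    rw [← hd, Derivation.leibniz, hd a, hd b, smul_smul, smul_smul, add_smul]

theorem d_localCoord : d (localCoord η t) = 1 :=
  eq_of_smul_D_eq hfree <| by
    rw [one_smul, ← hd, localCoord, map_sub, Derivation.map_algebraMap, sub_zero]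

theorem d_mem_ker_pow {k : ℕ} {h : A} (hh : h ∈ RingHom.ker η ^ (k + 1)) :
    d h ∈ RingHom.ker η ^ k := by
  induction k generalizing h with
  | zero => simp
  | succ k ih =>
    rw [pow_succ] at hh
    refine Submodule.mul_induction_on hh (fun a ha b hb => ?_) (fun x y hx hy => ?_)
    · rw [d_mul hfree hd]
      refine add_mem (Ideal.mul_mem_right _ _ ha) ?_
      rw [pow_succ']
      exact Ideal.mul_mem_mul hb (ih ha)
    · rw [map_add]
      exact add_mem hx hy

theorem iterate_d_mem_ker_pow {k s : ℕ} {h : A} (hh : h ∈ RingHom.ker η ^ (k + s)) :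
    (d ^ s) h ∈ RingHom.ker η ^ k := by
  induction s generalizing h with
  | zero => simpa using hh
  | succ s ih =>
    rw [pow_succ, Module.End.mul_apply]
    exact ih (d_mem_ker_pow η hfree hd hh)

theorem apply_iterate_d_eq_zero {k : ℕ} {h : A} (hh : h ∈ RingHom.ker η ^ (k + 1)) :
    η ((d ^ k) h) = 0 := by
  simpa using iterate_d_mem_ker_pow η hfree hd (k := 1) (by rwa [add_comm] at hh)

theorem d_localCoord_pow (j : ℕ) :
    d (localCoord η t ^ (j + 1)) = ((j : ℝ) + 1) • localCoord η t ^ j := by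
  induction j with
  | zero => simpa using d_localCoord η hfree hd
  | succ j ih =>
    rw [pow_succ' _ (j + 1), d_mul hfree hd, ih, d_localCoord η hfree hd, mul_smul_comm,
      mul_one, ← pow_succ']
    push_cast
    module

theorem apply_iterate_d_localCoord_pow (k : ℕ) :
    η ((d ^ k) (localCoord η t ^ k)) = k.factorial := by
  induction k with
  | zero => simp
  | succ k ih =>
    rw [pow_succ d, Module.End.mul_apply, d_localCoord_pow η hfree hd, map_smul, map_smul, ih,
      smul_eq_mul, Nat.factorial_succ]
    push_cast
    ring

theorem sub_smul_localCoord_mem_ker_sq {a : A} (ha : a ∈ RingHom.ker η) :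
    a - η (d a) • localCoord η t ∈ RingHom.ker η ^ 2 := by
  refine mem_ker_sq_of_apply_d_eq_zero η hd
    (sub_mem ha (Submodule.smul_of_tower_mem _ _ (localCoord_mem_ker η))) ?_
  rw [map_sub, map_smul, d_localCoord η hfree hd, map_sub, map_smul, map_one, smul_eq_mul,
    mul_one, sub_self]

theorem exists_sub_smul_localCoord_pow_mem {k : ℕ} {h : A} (hh : h ∈ RingHom.ker η ^ k) :
    ∃ c : ℝ, h - c • localCoord η t ^ k ∈ RingHom.ker η ^ (k + 1) := by
  induction k generalizing h with
  | zero => exact ⟨η h, by simp [RingHom.mem_ker, Algebra.smul_def]⟩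
  | succ k ih =>
    rw [pow_succ] at hh
    refine Submodule.mul_induction_on hh (fun a ha b hb => ?_) (fun x y ⟨c, hc⟩ ⟨c', hc'⟩ => ?_)
    · obtain ⟨c, hc⟩ := ih ha
      refine ⟨c * η (d b), ?_⟩
      have hb' := sub_smul_localCoord_mem_ker_sq η hfree hd hb
      have hsplit : a * b - (c * η (d b)) • localCoord η t ^ (k + 1) =
          (a - c • localCoord η t ^ k) * b +
            (c • localCoord η t ^ k) * (b - η (d b) • localCoord η t) := by
        simp only [Algebra.smul_def, map_mul]
        ring
      rw [hsplit]
      refine add_mem ?_ ?_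
      · rw [pow_succ]
        exact Ideal.mul_mem_mul hc hb
      · rw [add_assoc, pow_add]
        exact Ideal.mul_mem_mul
          (Submodule.smul_of_tower_mem _ _ (Ideal.pow_mem_pow (localCoord_mem_ker η) k)) hb'
    · exact ⟨c + c', by convert add_mem hc hc' using 1; module⟩

theorem apply_iterate_d_eq_mul_factorial {k : ℕ} {h : A} {c : ℝ}
    (hc : h - c • localCoord η t ^ k ∈ RingHom.ker η ^ (k + 1)) :
    η ((d ^ k) h) = c * k.factorial := by
  have := apply_iterate_d_eq_zero η hfree hd hc
  rwa [map_sub, map_sub, map_smul, map_smul, apply_iterate_d_localCoord_pow η hfree hd,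
    smul_eq_mul, sub_eq_zero] at this

theorem ordGe_iff_mem_ker_pow {h : A} {m : ℕ} : ordGe d h η m ↔ h ∈ RingHom.ker η ^ m := by
  refine ⟨fun hord => ?_, fun hh s hs => ?_⟩
  · induction m with
    | zero => simp
    | succ m ih =>
      obtain ⟨c, hc⟩ := exists_sub_smul_localCoord_pow_mem η hfree hd (ih (hord.mono m.le_succ))
      have hc0 : c = 0 := by
        have := apply_iterate_d_eq_mul_factorial η hfree hd hc
        rw [hord m m.lt_succ_self] at this
        exact (mul_eq_zero.mp this.symm).resolve_right (by positivity)
      simpa [hc0] using hc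
  · exact apply_iterate_d_eq_zero η hfree hd (Ideal.pow_le_pow_right hs hh)

theorem exists_ordGe_not_ordGe_succ [IsDomain A] [IsNoetherianRing A] {h : A} (h0 : h ≠ 0) :
    ∃ m, ordGe d h η m ∧ ¬ ordGe d h η (m + 1) := by
  by_contra! hstep
  have hall : ∀ m, h ∈ RingHom.ker η ^ m := fun m =>
    (ordGe_iff_mem_ker_pow η hfree hd).mp (Nat.rec ordGe_zero hstep m)
  have hbot := Ideal.iInf_pow_eq_bot_of_isDomain (RingHom.ker η) (RingHom.ker_ne_top η)
  exact h0 (by simpa [hbot] using Submodule.mem_iInf _ |>.mpr hall)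

theorem pow_le_span_sup_pow_succ {f : A} {m k : ℕ} {γ : ℝ} (hγ : γ ≠ 0)
    (hf : f - γ • localCoord η t ^ m ∈ RingHom.ker η ^ (m + 1)) (hk : m ≤ k) :
    RingHom.ker η ^ k ≤ Ideal.span {f} ⊔ RingHom.ker η ^ (k + 1) := by
  intro h hh
  obtain ⟨c, hc⟩ := exists_sub_smul_localCoord_pow_mem η hfree hd hh
  set τ := localCoord η t
  set q := (c / γ) • τ ^ (k - m)
  have hsplit : h - q * f = (h - c • τ ^ k) - q * (f - γ • τ ^ m) := by
    rw [mul_sub, smul_mul_smul_comm, div_mul_cancel₀ c hγ, pow_sub_mul_pow τ hk]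
    abel
  have hqf : q * (f - γ • τ ^ m) ∈ RingHom.ker η ^ (k + 1) := by
    have hq : q ∈ RingHom.ker η ^ (k - m) :=
      Submodule.smul_of_tower_mem _ _ (Ideal.pow_mem_pow (localCoord_mem_ker η) _)
    have := Ideal.mul_mem_mul hq hf
    rwa [← pow_add, show k - m + (m + 1) = k + 1 by omega] at this
  refine Submodule.mem_sup.mpr ⟨q * f, Ideal.mul_mem_left _ _ (Ideal.mem_span_singleton_self f),
    h - q * f, ?_, add_sub_cancel _ _⟩
  rw [hsplit]
  exact sub_mem hc hqf

theorem exists_mul_eq_mul_of_ordGe [IsNoetherianRing A] {f g : A} {m : ℕ}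
    (hf : ordGe d f η m) (hf' : ¬ ordGe d f η (m + 1)) (hg : ordGe d g η m) :
    ∃ u p : A, η u ≠ 0 ∧ u * g = p * f := by
  rw [ordGe_iff_mem_ker_pow η hfree hd] at hf hf' hg
  obtain ⟨γ, hγ⟩ := exists_sub_smul_localCoord_pow_mem η hfree hd hf
  have hγ0 : γ ≠ 0 := by
    rintro rfl
    exact hf' (by simpa using hγ)
  have hsup (N : ℕ) : RingHom.ker η ^ m ≤ Ideal.span {f} ⊔ RingHom.ker η ^ (m + N) := by
    induction N with
    | zero => exact le_sup_right
    | succ N ih =>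
      exact ih.trans (sup_le le_sup_left (pow_le_span_sup_pow_succ η hfree hd hγ0 hγ (by omega)))
  obtain ⟨r, hr, hrg⟩ := (RingHom.ker η).exists_one_sub_mul_mem_of_forall_mem_sup_pow
    (Ideal.span {f}) fun N =>
      ((hsup N).trans (sup_le_sup_left (Ideal.pow_le_pow_right (Nat.le_add_left N m)) _)) hg
  obtain ⟨p, hp⟩ := Ideal.mem_span_singleton'.mp hrg
  exact ⟨1 - r, p, by simp [RingHom.mem_ker.mp hr], hp.symm⟩

end LocalCoordinate

section NonnegCone

variable {A : Type} [CommRing A] [Algebra ℝ A]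

def nonnegCone (V : Submodule ℝ A) (S : Set (A →ₐ[ℝ] ℝ)) : Set A :=
  {g : A | g ∈ V ∧ ∀ η ∈ S, 0 ≤ η g}

theorem exists_pos_abs_apply_le_mul_apply {S : Set (A →ₐ[ℝ] ℝ)}
    (hS : IsCompact ((fun η : A →ₐ[ℝ] ℝ => (η : A → ℝ)) '' S)) {f g : A}
    (hf : ∀ η ∈ S, 0 ≤ η f) (hdiv : ∀ η ∈ S, ∃ u p : A, η u ≠ 0 ∧ u * g = p * f) :
    ∃ C > 0, ∀ η ∈ S, |η g| ≤ C * η f := by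
  obtain ⟨C, hC, hbound⟩ := hS.exists_pos_abs_le_mul (F := fun x => x f) (G := fun x => x g) <| by
    rintro _ ⟨η, hη, rfl⟩
    obtain ⟨u, p, hu, hup⟩ := hdiv η hη
    refine eventually_abs_le_mul_of_mul_eq_mul (U := fun x => x u) (Q := fun x => x p)
      (continuous_apply u).continuousAt (continuous_apply p).continuousAt hu ?_ ?_
    · rintro _ ⟨η', -, rfl⟩
      simpa only [map_mul] using congrArg η' hup
    · rintro _ ⟨η', hη', rfl⟩
      exact hf η' hη'
  exact ⟨C, hC, fun η hη => hbound η ⟨η, hη, rfl⟩⟩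

variable {V : Submodule ℝ A} {S : Set (A →ₐ[ℝ] ℝ)} {f : A}

theorem SpansExtremeRay.exists_pos_apply (hext : SpansExtremeRay (nonnegCone V S) f)
    (hf : f ∈ nonnegCone V S) (hf0 : f ≠ 0) : ∃ η ∈ S, 0 < η f := by
  by_contra! hle
  exact hext.neg_notMem hf hf0 ⟨V.neg_mem hf.1, fun η hη => by simpa using hle η hη⟩

theorem SpansExtremeRay.mem_span_of_forall_abs_le {g : A}
    (hext : SpansExtremeRay (nonnegCone V S) f) (hf : f ∈ nonnegCone V S) (hg : g ∈ V)
    {C : ℝ} (hC : 0 < C) (hbound : ∀ η ∈ S, |η g| ≤ C * η f) : g ∈ ℝ ∙ f := by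
  have hbound' : ∀ η ∈ S, |C⁻¹ * η g| ≤ η f := fun η hη => by
    rw [abs_mul, abs_inv, abs_of_pos hC, inv_mul_le_iff₀ hC]
    exact hbound η hη
  obtain ⟨c, hc⟩ := hext.exists_eq_smul (g := C⁻¹ • g)
    ⟨V.add_mem hf.1 (V.smul_mem _ hg), fun η hη => by
      simpa [neg_le_iff_add_nonneg'] using (abs_le.mp (hbound' η hη)).1⟩
    ⟨V.sub_mem hf.1 (V.smul_mem _ hg), fun η hη => by
      simpa using (abs_le.mp (hbound' η hη)).2⟩
  exact Submodule.mem_span_singleton.mpr ⟨C * c, by rw [mul_smul, ← hc, smul_inv_smul₀ hC.ne']⟩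

end NonnegCone

theorem mem_span_of_forall_ordGe {A : Type} [CommRing A] [IsDomain A] [Algebra ℝ A]
    [IsNoetherianRing A] {t : A} {d : Module.End ℝ A}
    (hfree : ∀ ω : Ω[A⁄ℝ], ∃! c : A, ω = c • KaehlerDifferential.D ℝ A t)
    (hd : ∀ g : A, KaehlerDifferential.D ℝ A g = d g • KaehlerDifferential.D ℝ A t)
    {S : Set (A →ₐ[ℝ] ℝ)} (hS : IsCompact ((fun η : A →ₐ[ℝ] ℝ => (η : A → ℝ)) '' S))
    {V : Submodule ℝ A} {f g : A} (hext : SpansExtremeRay (nonnegCone V S) f)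
    (hf : f ∈ nonnegCone V S) (hf0 : f ≠ 0) (hg : g ∈ V)
    (hfg : ∀ η ∈ S, ∀ m, ordGe d f η m → ordGe d g η m) : g ∈ ℝ ∙ f := by
  obtain ⟨C, hC, hbound⟩ := exists_pos_abs_apply_le_mul_apply hS hf.2 fun η hη => by
    obtain ⟨m, hm, hm'⟩ := exists_ordGe_not_ordGe_succ η hfree hd hf0
    exact exists_mul_eq_mul_of_ordGe η hfree hd hm hm' (hfg η hη m hm)
  exact hext.mem_span_of_forall_abs_le hf hg hC hbound

section Counting

variable {A : Type} [CommRing A] [Algebra ℝ A] {d : Module.End ℝ A} {S : Set (A →ₐ[ℝ] ℝ)}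
  {V : Submodule ℝ A} {f : A} {ord : (A →ₐ[ℝ] ℝ) → ℕ}

theorem finrank_le_sum_ord_add_one [FiniteDimensional ℝ V] (Z : Finset (A →ₐ[ℝ] ℝ))
    (hZ : ∀ η ∈ S, η f = 0 → η ∈ Z) (hord_max : ∀ η, ¬ ordGe d f η (ord η + 1))
    (hVf : ∀ g ∈ V, (∀ η ∈ S, ∀ m, ordGe d f η m → ordGe d g η m) → g ∈ ℝ ∙ f) :
    finrank ℝ V ≤ ∑ η ∈ Z, ord η + 1 := by
  let L : (Σ η : Z, Fin (ord η)) → A →ₗ[ℝ] ℝ :=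
    fun i => (i.1 : A →ₐ[ℝ] ℝ).toLinearMap ∘ₗ d ^ (i.2 : ℕ)
  have hcard : Fintype.card (Σ η : Z, Fin (ord η)) = ∑ η ∈ Z, ord η := by
    simp [Fintype.card_sigma, Finset.sum_attach]
  rw [← hcard]
  refine V.finrank_le_card_add_one L f fun g hg hzero => hVf g hg fun η hη m hm => ?_
  rcases Nat.eq_zero_or_pos m with rfl | hm0
  · exact ordGe_zero
  have hle : m ≤ ord η := by
    by_contra! hlt
    exact hord_max η (hm.mono hlt)
  exact fun s hs => hzero ⟨⟨η, hZ η hη (hm.apply_eq_zero hm0.ne')⟩, ⟨s, hs.trans_le hle⟩⟩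

theorem exists_fin_zeros_of_finset {n : ℕ} (Z : Finset (A →ₐ[ℝ] ℝ)) (b : (A →ₐ[ℝ] ℝ) → ℕ)
    (hZS : ∀ ξ ∈ Z, ξ ∈ S) (hb : ∀ ξ ∈ Z, 1 ≤ b ξ ∧ ordGe d f ξ (b ξ))
    (hn : n ≤ ∑ ξ ∈ Z, b ξ) :
    ∃ (r : ℕ) (ξ : Fin r → (A →ₐ[ℝ] ℝ)) (b : Fin r → ℕ),
      Function.Injective ξ ∧ (∀ i, ξ i ∈ S) ∧ (∀ i, 1 ≤ b i) ∧
      n ≤ ∑ i, b i ∧ ∀ i, ordGe d f (ξ i) (b i) := by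
  let e := Z.equivFin.symm
  refine ⟨Z.card, fun i => e i, fun i => b (e i), Subtype.val_injective.comp e.injective,
    fun i => hZS _ (e i).2, fun i => (hb _ (e i).2).1, ?_, fun i => (hb _ (e i).2).2⟩
  rwa [e.sum_comp (fun ξ => b ξ), Finset.sum_coe_sort Z b]

theorem exists_fin_zeros_sum_ge {n : ℕ} (hV : finrank ℝ V = n + 1)
    (hord : ∀ η, ordGe d f η (ord η)) (hord_max : ∀ η, ¬ ordGe d f η (ord η + 1))
    (hVf : ∀ g ∈ V, (∀ η ∈ S, ∀ m, ordGe d f η m → ordGe d g η m) → g ∈ ℝ ∙ f) :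
    ∃ (r : ℕ) (ξ : Fin r → (A →ₐ[ℝ] ℝ)) (b : Fin r → ℕ),
      Function.Injective ξ ∧ (∀ i, ξ i ∈ S) ∧ (∀ i, 1 ≤ b i) ∧
      n ≤ ∑ i, b i ∧ ∀ i, ordGe d f (ξ i) (b i) := by
  by_cases hZ : {η | η ∈ S ∧ η f = 0}.Infinite
  · obtain ⟨Z, hZ, rfl⟩ := hZ.exists_subset_card_eq n
    exact exists_fin_zeros_of_finset Z 1 (fun ξ hξ => (hZ hξ).1)
      (fun ξ hξ => ⟨le_rfl, ordGe_one_iff.mpr (hZ hξ).2⟩) (by simp)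
  · have hZ := Set.not_infinite.mp hZ
    have : FiniteDimensional ℝ V := Module.finite_of_finrank_eq_succ hV
    refine exists_fin_zeros_of_finset hZ.toFinset ord (fun ξ hξ => (hZ.mem_toFinset.mp hξ).1)
      (fun ξ hξ => ⟨Nat.one_le_iff_ne_zero.mpr fun h0 => hord_max ξ ?_, hord ξ⟩) ?_
    · rw [h0]
      exact ordGe_one_iff.mpr (hZ.mem_toFinset.mp hξ).2
    · have := finrank_le_sum_ord_add_one hZ.toFinset (fun η hη h0 => hZ.mem_toFinset.mpr ⟨hη, h0⟩)
        hord_max hVf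
      omega

end Counting

theorem stmt17_general (A : Type) [CommRing A] [IsDomain A] [Algebra ℝ A]
    [Algebra.FiniteType ℝ A]
    (t : A)
    (hfree : ∀ ω : Ω[A⁄ℝ], ∃! c : A, ω = c • KaehlerDifferential.D ℝ A t)
    (d : Module.End ℝ A)
    (hd : ∀ g : A, KaehlerDifferential.D ℝ A g =
      d g • KaehlerDifferential.D ℝ A t)
    (S : Set (A →ₐ[ℝ] ℝ))
    (hScpt : IsCompact ((fun η : A →ₐ[ℝ] ℝ => (η : A → ℝ)) '' S))
    (n : ℕ) (V : Submodule ℝ A) (hV : Module.finrank ℝ V = n + 1)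
    (P : Set A) (hP : P = {g : A | g ∈ V ∧ ∀ η ∈ S, 0 ≤ η g})
    (f : A) (hf : f ∈ P) (hf0 : f ≠ 0)
    (hext : ∀ p ∈ P, ∀ q ∈ P,
      p + q ∈ {x : A | ∃ a : ℝ, 0 ≤ a ∧ x = a • f} →
        (p ∈ {x : A | ∃ a : ℝ, 0 ≤ a ∧ x = a • f} ∧
          q ∈ {x : A | ∃ a : ℝ, 0 ≤ a ∧ x = a • f})) :
    -- `f` is determined up to positive scaling by its zeros with multiplicities
    (∀ g ∈ P, g ≠ 0 →
      (∀ η ∈ S, ∀ m : ℕ, ordGe d f η m ↔ ordGe d g η m) →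
        ∃ c : ℝ, 0 < c ∧ g = c • f) ∧
    -- `f` has at least `n` zeros in `S`, counted with multiplicities
    (∃ (r : ℕ) (ξ : Fin r → (A →ₐ[ℝ] ℝ)) (b : Fin r → ℕ),
      Function.Injective ξ ∧ (∀ i, ξ i ∈ S) ∧ (∀ i, 1 ≤ b i) ∧
      n ≤ ∑ i, b i ∧ ∀ i, ordGe d f (ξ i) (b i)) := by
  have : IsNoetherianRing A := Algebra.FiniteType.isNoetherianRing ℝ A
  subst hP
  have hVf : ∀ g ∈ V, (∀ η ∈ S, ∀ m, ordGe d f η m → ordGe d g η m) → g ∈ ℝ ∙ f :=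
    fun g => mem_span_of_forall_ordGe hfree hd hScpt hext hf hf0
  choose ord hord hord_max using fun η => exists_ordGe_not_ordGe_succ η hfree hd hf0
  refine ⟨fun g hg hg0 hfg => ?_, exists_fin_zeros_sum_ge hV hord hord_max hVf⟩
  obtain ⟨c, rfl⟩ := Submodule.mem_span_singleton.mp (hVf g hg.1 fun η hη m => (hfg η hη m).1)
  obtain ⟨η, hη, hpos⟩ := SpansExtremeRay.exists_pos_apply hext hf hf0
  have hc : 0 ≤ c := nonneg_of_mul_nonneg_left (by simpa using hg.2 η hη) hpos
  refine ⟨c, hc.lt_of_ne ?_, rfl⟩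
  rintro rfl
  exact hg0 (zero_smul ℝ f)

/-- Let `C` be an irreducible non-singular affine curve over `ℝ`,
`S ⊆ C(ℝ)` compact without isolated points, `V ⊆ ℝ[C]` of dimension `n+1`,
and `P_{V,S} = {f ∈ V : f|_S ≥ 0}`.  If `f` spans an extreme ray of
`P_{V,S}`, then `f` is determined up to positive scaling by its zeros on `S`
counted with multiplicities; in particular `f` has at least `n` zeros in `S`
counted with multiplicities. -/
theorem stmt17 (A : Type) [CommRing A] [IsDomain A] [Algebra ℝ A]
    [Algebra.FiniteType ℝ A] [Algebra.Smooth ℝ A]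
    (hdim : ringKrullDim A = 1)
    (t : A)
    (hfree : ∀ ω : Ω[A⁄ℝ], ∃! c : A, ω = c • KaehlerDifferential.D ℝ A t)
    (d : Module.End ℝ A)
    (hd : ∀ g : A, KaehlerDifferential.D ℝ A g =
      d g • KaehlerDifferential.D ℝ A t)
    (S : Set (A →ₐ[ℝ] ℝ))
    (hScpt : IsCompact ((fun η : A →ₐ[ℝ] ℝ => (η : A → ℝ)) '' S))
    (hSnoiso : ∀ x ∈ (fun η : A →ₐ[ℝ] ℝ => (η : A → ℝ)) '' S,
      x ∈ closure (((fun η : A →ₐ[ℝ] ℝ => (η : A → ℝ)) '' S) \ {x}))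
    (hSne : S.Nonempty)
    (n : ℕ) (V : Submodule ℝ A) (hV : Module.finrank ℝ V = n + 1)
    (P : Set A) (hP : P = {g : A | g ∈ V ∧ ∀ η ∈ S, 0 ≤ η g})
    (f : A) (hf : f ∈ P) (hf0 : f ≠ 0)
    (hext : ∀ p ∈ P, ∀ q ∈ P,
      p + q ∈ {x : A | ∃ a : ℝ, 0 ≤ a ∧ x = a • f} →
        (p ∈ {x : A | ∃ a : ℝ, 0 ≤ a ∧ x = a • f} ∧
          q ∈ {x : A | ∃ a : ℝ, 0 ≤ a ∧ x = a • f})) :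
    -- `f` is determined up to positive scaling by its zeros with multiplicities
    (∀ g ∈ P, g ≠ 0 →
      (∀ η ∈ S, ∀ m : ℕ, ordGe d f η m ↔ ordGe d g η m) →
        ∃ c : ℝ, 0 < c ∧ g = c • f) ∧
    -- `f` has at least `n` zeros in `S`, counted with multiplicities
    (∃ (r : ℕ) (ξ : Fin r → (A →ₐ[ℝ] ℝ)) (b : Fin r → ℕ),
      Function.Injective ξ ∧ (∀ i, ξ i ∈ S) ∧ (∀ i, 1 ≤ b i) ∧
      n ≤ ∑ i, b i ∧ ∀ i, ordGe d f (ξ i) (b i)) :=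
  stmt17_general A t hfree d hd S hScpt n V hV P hP f hf hf0 hext
end

section
/- Let n = 2k be even and let K ⊂ ℝⁿ be the closed convex hull of the rational normal curve {(t, t², ..., tⁿ) : t ∈ ℝ}. Then K is exactly the set of x ∈ ℝⁿ for which the (k+1)×(k+1) Hankel matrix H(x) with entries H(x)_{ij} = x_{i+j} (0 ≤ i, j ≤ k, with x_0 := 1) is positive semidefinite. -/
/-!
Points of the curve have Hankel matrix `v vᵀ` with `v = (1, t, …, tᵏ)`, and positive
semidefiniteness of `H(x)` is a family of affine inequalities in `x`, so the closed convex hull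
lies in the PSD locus. Conversely, `H(x) ⪰ 0` says exactly that the Riesz functional
`L_x(∑ pⱼ Xʲ) = ∑ pⱼ xⱼ` is nonnegative on squares of polynomials of degree `≤ k`. An affine
functional separating `x` from the hull is `L_·(p)` for a polynomial `p` of degree `≤ 2k` which is
nonnegative on `ℝ` (it is positive on the curve) while `L_x(p) < 0`. But a nonnegative univariate
polynomial of degree `≤ 2k` is a sum of squares of polynomials of degree `≤ k`: subtract its
minimum value, split off the resulting double root and induct.
-/

/-- The `(k+1)×(k+1)` Hankel matrix of `x ∈ ℝ^{2k}`, with entries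
`H(x)_{ij} = x_{i+j}` where `x_0 := 1`. -/
def hankelMatrix (k : ℕ) (x : Fin (2 * k) → ℝ) :
    Matrix (Fin (k + 1)) (Fin (k + 1)) ℝ :=
  Matrix.of fun i j =>
    if h : (i : ℕ) + (j : ℕ) = 0 then 1
    else x ⟨(i : ℕ) + (j : ℕ) - 1, by
      have hi := i.isLt; have hj := j.isLt; omega⟩

open Polynomial Finset Matrix

section SumsOfSquares

noncomputable def sosCone (n : ℕ) : AddSubmonoid ℝ[X] :=
  AddSubmonoid.closure {p | ∃ q : ℝ[X], q.natDegree ≤ n ∧ q ^ 2 = p}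

lemma C_mem_sosCone {c : ℝ} (hc : 0 ≤ c) (n : ℕ) : C c ∈ sosCone n :=
  AddSubmonoid.subset_closure ⟨C √c, by simp, by rw [← C_pow, Real.sq_sqrt hc]⟩

lemma sq_mul_mem_sosCone {p : ℝ[X]} {n : ℕ} (hp : p ∈ sosCone n) (t₀ : ℝ) :
    (X - C t₀) ^ 2 * p ∈ sosCone (n + 1) := by
  induction hp using AddSubmonoid.closure_induction with
  | mem p hp =>
    obtain ⟨q, hq, rfl⟩ := hp
    refine AddSubmonoid.subset_closure ⟨(X - C t₀) * q, ?_, by ring⟩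
    grw [natDegree_mul_le, natDegree_X_sub_C, hq, add_comm]
  | zero => simp
  | add p q _ _ hp hq => simpa [mul_add] using add_mem hp hq

lemma Continuous.nonneg_of_forall_ne {α : Type*} [TopologicalSpace α] {f : α → ℝ}
    (hf : Continuous f) {t₀ : α} [(nhdsWithin t₀ {t₀}ᶜ).NeBot] (h : ∀ t ≠ t₀, 0 ≤ f t) (t : α) :
    0 ≤ f t :=
  closure_minimal (s := {t₀}ᶜ) h (isClosed_le continuous_const hf)
    (by rw [closure_compl_singleton]; trivial)

lemma exists_eq_C_add_sq_mul_of_nonneg {p : ℝ[X]} (hp : ∀ t, 0 ≤ p.eval t) :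
    ∃ m t₀ r, 0 ≤ m ∧ (∀ t, 0 ≤ r.eval t) ∧ r.natDegree ≤ p.natDegree - 2 ∧
      p = C m + (X - C t₀) ^ 2 * r := by
  obtain ⟨t₀, ht₀⟩ := p.exists_forall_norm_le
  have hmin : ∀ t, p.eval t₀ ≤ p.eval t := fun t => by
    simpa [abs_of_nonneg (hp _)] using ht₀ t
  set m := p.eval t₀
  by_cases hg : p - C m = 0
  · exact ⟨m, t₀, 0, hp t₀, by simp, by simp, by simpa [sub_eq_zero] using hg⟩
  have hderiv : (derivative (p - C m)).IsRoot t₀ := by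
    have hloc : IsLocalMin (fun t => p.eval t) t₀ :=
      (isMinOn_univ_iff.mpr hmin).isLocalMin Filter.univ_mem
    simpa [← Polynomial.deriv] using hloc.deriv_eq_zero
  obtain ⟨r, hr⟩ : (X - C t₀) ^ 2 ∣ p - C m :=
    (le_rootMultiplicity_iff hg).mp <|
      (one_lt_rootMultiplicity_iff_isRoot hg).mpr ⟨by simp [m], hderiv⟩
  have hr0 : r ≠ 0 := by rintro rfl; exact hg (by simpa using hr)
  refine ⟨m, t₀, r, hp t₀, r.continuous.nonneg_of_forall_ne (t₀ := t₀) fun t ht => ?_, ?_, by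
    rw [← hr]; ring⟩
  · have h := congrArg (eval t) hr
    simp only [eval_sub, eval_C, eval_mul, eval_pow, eval_X] at h
    have : 0 < (t - t₀) ^ 2 := by have := sub_ne_zero.mpr ht; positivity
    exact (mul_nonneg_iff_of_pos_left this).mp (h ▸ sub_nonneg.mpr (hmin t))
  · have := congrArg natDegree hr
    rw [natDegree_sub_C, natDegree_mul (pow_ne_zero _ (X_sub_C_ne_zero t₀)) hr0,
      natDegree_pow, natDegree_X_sub_C] at this
    omega

lemma mem_sosCone_of_nonneg (n : ℕ) {p : ℝ[X]} (hdeg : p.natDegree ≤ 2 * n)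
    (hp : ∀ t, 0 ≤ p.eval t) : p ∈ sosCone n := by
  induction n generalizing p with
  | zero =>
    obtain ⟨c, rfl⟩ := natDegree_eq_zero.mp (Nat.le_zero.mp hdeg)
    exact C_mem_sosCone (by simpa using hp 0) 0
  | succ n ih =>
    obtain ⟨m, t₀, r, hm, hr, hdr, rfl⟩ := exists_eq_C_add_sq_mul_of_nonneg hp
    exact add_mem (C_mem_sosCone hm _) (sq_mul_mem_sosCone (ih (by omega) hr) t₀)

end SumsOfSquares

section Moments

variable {k : ℕ}

def moment (k : ℕ) (x : Fin (2 * k) → ℝ) : ℕ → ℝ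
  | 0 => 1
  | j + 1 => if h : j < 2 * k then x ⟨j, h⟩ else 0

lemma hankelMatrix_apply (x : Fin (2 * k) → ℝ) (i j : Fin (k + 1)) :
    hankelMatrix k x i j = moment k x (i + j) := by
  by_cases h : (i : ℕ) + j = 0
  · simp only [hankelMatrix, of_apply, h, moment, dite_true]
  · obtain ⟨n, hn⟩ := Nat.exists_eq_add_one_of_ne_zero h
    have := i.isLt; have := j.isLt
    simp only [hankelMatrix, of_apply, hn, moment, dif_pos (show n < 2 * k by omega)]
    simp

lemma moment_smul_add_smul {a b : ℝ} (hab : a + b = 1) (x y : Fin (2 * k) → ℝ) (j : ℕ) :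
    moment k (a • x + b • y) j = a * moment k x j + b * moment k y j := by
  cases j with
  | zero => simp [moment, hab]
  | succ j => simp only [moment]; split_ifs <;> simp

lemma continuous_moment (j : ℕ) : Continuous fun x : Fin (2 * k) → ℝ => moment k x j := by
  cases j with
  | zero => exact continuous_const
  | succ j => simp only [moment]; split_ifs <;> fun_prop

def momentCurve (k : ℕ) (t : ℝ) : Fin (2 * k) → ℝ := fun m => t ^ ((m : ℕ) + 1)

lemma moment_momentCurve (t : ℝ) {j : ℕ} (hj : j ≤ 2 * k) :
    moment k (momentCurve k t) j = t ^ j := by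
  cases j with
  | zero => simp [moment]
  | succ j => simp [moment, momentCurve, show j < 2 * k by omega]

noncomputable def rieszFunctional (k : ℕ) (x : Fin (2 * k) → ℝ) : ℝ[X] →ₗ[ℝ] ℝ :=
  ∑ j ∈ range (2 * k + 1), moment k x j • lcoeff ℝ j

lemma rieszFunctional_apply (x : Fin (2 * k) → ℝ) (p : ℝ[X]) :
    rieszFunctional k x p = ∑ j ∈ range (2 * k + 1), moment k x j * p.coeff j := by
  simp [rieszFunctional]

lemma rieszFunctional_monomial (x : Fin (2 * k) → ℝ) {j : ℕ} (hj : j ≤ 2 * k) (c : ℝ) :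
    rieszFunctional k x (monomial j c) = c * moment k x j := by
  simp [rieszFunctional_apply, coeff_monomial, mul_comm]
  omega

lemma rieszFunctional_momentCurve (t : ℝ) {p : ℝ[X]} (hp : p.natDegree ≤ 2 * k) :
    rieszFunctional k (momentCurve k t) p = p.eval t := by
  rw [rieszFunctional_apply, eval_eq_sum_range' (Nat.lt_succ_of_le hp)]
  refine sum_congr rfl fun j hj => ?_
  rw [moment_momentCurve t (Nat.lt_succ_iff.mp (mem_range.mp hj)), mul_comm]

lemma rieszFunctional_smul_add_smul {a b : ℝ} (hab : a + b = 1) (x y : Fin (2 * k) → ℝ)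
    (p : ℝ[X]) : rieszFunctional k (a • x + b • y) p =
      a * rieszFunctional k x p + b * rieszFunctional k y p := by
  simp only [rieszFunctional_apply, moment_smul_add_smul hab, mul_sum, ← sum_add_distrib]
  exact sum_congr rfl fun j _ => by ring

lemma continuous_rieszFunctional (p : ℝ[X]) :
    Continuous fun x : Fin (2 * k) → ℝ => rieszFunctional k x p := by
  simp only [rieszFunctional_apply]
  exact continuous_finsetSum _ fun j _ => (continuous_moment j).mul continuous_const

end Moments

section HankelMatrix

variable {k : ℕ}

lemma hankelMatrix_isHermitian (x : Fin (2 * k) → ℝ) : (hankelMatrix k x).IsHermitian :=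
  IsHermitian.ext fun i j => by simp [hankelMatrix_apply, add_comm]

lemma dotProduct_hankelMatrix_mulVec (x : Fin (2 * k) → ℝ) (v : Fin (k + 1) → ℝ) :
    v ⬝ᵥ (hankelMatrix k x *ᵥ v) =
      rieszFunctional k x ((∑ i : Fin (k + 1), monomial (i : ℕ) (v i)) ^ 2) := by
  rw [sq, sum_mul_sum]
  simp only [monomial_mul_monomial, map_sum, dotProduct, mulVec, mul_sum, hankelMatrix_apply]
  refine sum_congr rfl fun i _ => sum_congr rfl fun j _ => ?_
  rw [rieszFunctional_monomial x (by omega)]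
  ring

lemma hankelMatrix_posSemidef_iff (x : Fin (2 * k) → ℝ) : (hankelMatrix k x).PosSemidef ↔
    ∀ q : ℝ[X], q.natDegree ≤ k → 0 ≤ rieszFunctional k x (q ^ 2) := by
  refine ⟨fun hx q hq => ?_, fun h => .of_dotProduct_mulVec_nonneg (hankelMatrix_isHermitian x)
    fun v => ?_⟩
  · have hq : ∑ i : Fin (k + 1), monomial i (q.coeff i) = q :=
      (Fin.sum_univ_eq_sum_range (fun i => monomial i (q.coeff i)) _).trans
        (q.as_sum_range' _ (Nat.lt_succ_of_le hq)).symm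
    simpa [dotProduct_hankelMatrix_mulVec, hq] using hx.dotProduct_mulVec_nonneg fun i => q.coeff i
  · rw [star_trivial, dotProduct_hankelMatrix_mulVec]
    refine h _ (natDegree_sum_le_of_forall_le _ _ fun i _ => ?_)
    exact (natDegree_monomial_le _).trans (Nat.lt_succ_iff.mp i.isLt)

lemma convex_setOf_hankelMatrix_posSemidef :
    Convex ℝ {x : Fin (2 * k) → ℝ | (hankelMatrix k x).PosSemidef} := by
  intro x hx y hy a b ha hb hab
  simp only [Set.mem_ofPred_eq, hankelMatrix_posSemidef_iff] at hx hy ⊢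
  intro q hq
  rw [rieszFunctional_smul_add_smul hab]
  exact add_nonneg (mul_nonneg ha (hx q hq)) (mul_nonneg hb (hy q hq))

lemma isClosed_setOf_hankelMatrix_posSemidef :
    IsClosed {x : Fin (2 * k) → ℝ | (hankelMatrix k x).PosSemidef} := by
  simp only [hankelMatrix_posSemidef_iff, Set.ofPred_forall]
  exact isClosed_iInter fun q => isClosed_iInter fun _ =>
    isClosed_le continuous_const (continuous_rieszFunctional _)

lemma hankelMatrix_momentCurve_posSemidef (t : ℝ) : (hankelMatrix k (momentCurve k t)).PosSemidef :=
  (hankelMatrix_posSemidef_iff _).mpr fun q hq => by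
    rw [rieszFunctional_momentCurve t (natDegree_pow_le.trans (by omega)), eval_pow]
    positivity

lemma rieszFunctional_nonneg_of_mem_sosCone {x : Fin (2 * k) → ℝ}
    (hx : (hankelMatrix k x).PosSemidef) {p : ℝ[X]} (hp : p ∈ sosCone k) :
    0 ≤ rieszFunctional k x p := by
  induction hp using AddSubmonoid.closure_induction with
  | mem p hp =>
    obtain ⟨q, hq, rfl⟩ := hp
    exact (hankelMatrix_posSemidef_iff x).mp hx q hq
  | zero => simp
  | add p q _ _ hp hq =>
    rw [map_add]
    exact add_nonneg hp hq

end HankelMatrix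

lemma exists_rieszFunctional_eq_sub {k : ℕ} (f : (Fin (2 * k) → ℝ) →ₗ[ℝ] ℝ) (u : ℝ) :
    ∃ p : ℝ[X], p.natDegree ≤ 2 * k ∧ ∀ y, rieszFunctional k y p = f y - u := by
  set a : Fin (2 * k) → ℝ := fun m => f fun j => if m = j then 1 else 0
  refine ⟨C (-u) + ∑ m : Fin (2 * k), monomial ((m : ℕ) + 1) (a m), ?_, fun y => ?_⟩
  · refine natDegree_add_le_of_degree_le (by simp) (natDegree_sum_le_of_forall_le _ _ fun m _ => ?_)
    exact (natDegree_monomial_le _).trans m.isLt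
  · have hterm (m : Fin (2 * k)) (c : ℝ) :
        rieszFunctional k y (monomial ((m : ℕ) + 1) c) = c * y m := by
      simp [rieszFunctional_monomial y m.isLt, moment]
    rw [map_add, map_sum, ← monomial_zero_left, rieszFunctional_monomial y (Nat.zero_le _),
      f.pi_apply_eq_sum_univ y]
    simp [hterm, moment, a, mul_comm]
    ring

/-- For `n = 2k` even, the closed convex hull `K` of the rational normal
curve `{(t, t², …, tⁿ) : t ∈ ℝ}` in `ℝⁿ` is exactly the set of `x` whose
Hankel matrix `H(x)` (with `x_0 := 1`) is positive semidefinite. -/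
theorem stmt19 (k : ℕ) :
    closure (convexHull ℝ
        {x : Fin (2 * k) → ℝ | ∃ t : ℝ,
          x = fun m : Fin (2 * k) => t ^ ((m : ℕ) + 1)}) =
      {x : Fin (2 * k) → ℝ | (hankelMatrix k x).PosSemidef} := by
  refine subset_antisymm (closure_minimal (convexHull_min ?_ convex_setOf_hankelMatrix_posSemidef)
    isClosed_setOf_hankelMatrix_posSemidef) fun x hx => ?_
  · rintro _ ⟨t, rfl⟩
    exact hankelMatrix_momentCurve_posSemidef t
  by_contra hxK
  obtain ⟨f, u, hfx, hfK⟩ :=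
    geometric_hahn_banach_point_closed (convex_convexHull ℝ _).closure isClosed_closure hxK
  obtain ⟨p, hdeg, hp⟩ := exists_rieszFunctional_eq_sub f.toLinearMap u
  have hpos (t : ℝ) : 0 ≤ p.eval t := by
    rw [← rieszFunctional_momentCurve t hdeg, hp]
    exact (sub_pos.mpr (hfK _ (subset_closure (subset_convexHull ℝ _ ⟨t, rfl⟩)))).le
  have hLx := rieszFunctional_nonneg_of_mem_sosCone hx (mem_sosCone_of_nonneg k hdeg hpos)
  rw [hp] at hLx
  exact hfx.not_ge (sub_nonneg.mp hLx)
end
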